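/- arXiv:2402.13087 — 9 statements merged into one kernel-verified Lean document; each statement's English description precedes it below -/
import Mathlib

section
/- Let Γ be a finite type, let p and p' be probability mass functions on Γ with p'(γ) > 0 for every γ ∈ Γ, let k ≥ 1 be an integer, and let α > 1 be real. Let ĝ : Γ → ℝ be any score function (possibly not injective), and let g* : Γ → ℝ be any injective score function refining the weak order of ĝ, i.e. ĝ(x) < ĝ(y) implies g*(x) < g*(y) for all x, y ∈ Γ. Then D_α(F_{k,ĝ}[p] ‖ F_{k,ĝ}[p']) ≤ D_α(F_{k,g*}[p] ‖ F_{k,g*}[p']). In particular, since an injective refinement of any score function exists on a finite type, for every non-injective ĝ there exists an injective g* with D_α(F_{k,ĝ}[p] ‖ F_{k,ĝ}[p']) ≤ D_α(F_{k,g*}[p] ‖ F_{k,g*}[p']). -/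
open scoped Classical BigOperators

/-- Rényi divergence of order `α` between two pmfs `M`, `N` on a finite type:
`D_α(M‖N) = (1/(α−1))·log(Σ_x M(x)^α·N(x)^{1−α})` (real powers). -/
noncomputable def renyiDiv {Γ : Type*} [Fintype Γ] (α : ℝ) (M N : Γ → ℝ) : ℝ :=
  (1 / (α - 1)) * Real.log (∑ x, M x ^ α * N x ^ (1 - α))

/-- Best-of-`k` selection distribution with uniform tie-breaking: given a pmf `p` on a
finite type `Γ`, a score function `g`, and `k`, the probability of outputting `γ` is
`(1/|{i : g i = g γ}|)·[(Σ_{i : g i ≤ g γ} p i)^k − (Σ_{i : g i < g γ} p i)^k]`. -/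
noncomputable def bestOfK {Γ : Type*} [Fintype Γ] (p : Γ → ℝ) (g : Γ → ℝ) (k : ℕ)
    (γ : Γ) : ℝ :=
  (1 / (Finset.univ.filter (fun i => g i = g γ)).card) *
    ((∑ i ∈ Finset.univ.filter (fun i => g i ≤ g γ), p i) ^ k -
      (∑ i ∈ Finset.univ.filter (fun i => g i < g γ), p i) ^ k)

/-!
Under `ghat` the selection distribution is uniform on each score class `C = {ghat = v}`, whose
total mass is the probability `m` that the best of `k` draws has score `v`. An injective
refinement `gstar` gives the same class the same total mass: every point of lower `ghat`-score
lies below `C` for `gstar`, so the masses of the points of `C` telescope to `m`. Hence the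
`ghat`-Rényi sum over `C` is `m ^ α * m' ^ (1 - α)`, and by Jensen's inequality for `t ↦ t ^ α`
this is at most the `gstar`-Rényi sum over `C`. Summing over the classes and taking logarithms
gives the claim.
-/
open Finset

theorem Real.rpow_sum_mul_rpow_sum_one_sub_le {ι : Type*} (s : Finset ι) {a b : ι → ℝ}
    (ha : ∀ i ∈ s, 0 ≤ a i) (hb : ∀ i ∈ s, 0 < b i) {α : ℝ} (hα : 1 ≤ α) :
    (∑ i ∈ s, a i) ^ α * (∑ i ∈ s, b i) ^ (1 - α) ≤ ∑ i ∈ s, a i ^ α * b i ^ (1 - α) := by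
  rcases s.eq_empty_or_nonempty with rfl | hs
  · simp [Real.zero_rpow (by positivity : α ≠ 0)]
  set B := ∑ i ∈ s, b i
  have hB : 0 < B := sum_pos hb hs
  -- Jensen for `t ↦ t ^ α` at the points `a i / b i` with weights `b i / B`.
  have jensen := Real.rpow_arith_mean_le_arith_mean_rpow s (fun i => b i / B) (fun i => a i / b i)
    (fun i hi => by have := hb i hi; positivity) (by rw [← sum_div, div_self hB.ne'])
    (fun i hi => div_nonneg (ha i hi) (hb i hi).le) hα
  have hmean : ∑ i ∈ s, b i / B * (a i / b i) = (∑ i ∈ s, a i) / B := by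
    rw [sum_div]
    exact sum_congr rfl fun i hi => by field_simp [(hb i hi).ne']
  have hterm : ∀ i ∈ s, b i / B * (a i / b i) ^ α = a i ^ α * b i ^ (1 - α) / B := by
    intro i hi
    rw [Real.div_rpow (ha i hi) (hb i hi).le, Real.rpow_sub (hb i hi), Real.rpow_one]
    have := Real.rpow_pos_of_pos (hb i hi) α
    field_simp
  rw [hmean, sum_congr rfl hterm, ← sum_div, Real.div_rpow (sum_nonneg ha) hB.le] at jensen
  rw [Real.rpow_sub hB, Real.rpow_one]
  have := Real.rpow_pos_of_pos hB α
  calc (∑ i ∈ s, a i) ^ α * (B / B ^ α) = B * ((∑ i ∈ s, a i) ^ α / B ^ α) := by ring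
    _ ≤ B * ((∑ i ∈ s, a i ^ α * b i ^ (1 - α)) / B) := by gcongr
    _ = _ := by field_simp

theorem Finset.sum_filter_eq_sum_lt_add_sum_filter_eq {ι M β : Type*} [AddCommMonoid M]
    [LinearOrder β] (s : Finset ι) (f : ι → β) (v : β) {P : ι → Prop} [DecidablePred P]
    (hP : ∀ i, f i ≠ v → (P i ↔ f i < v)) (q : ι → M) :
    ∑ i ∈ s with P i, q i = ∑ i ∈ s with f i < v, q i + ∑ i ∈ s with f i = v ∧ P i, q i := by
  rw [← sum_filter_add_sum_filter_not (s.filter P) (fun i => f i = v), add_comm,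
    filter_filter, filter_filter]
  congr 2
  · ext i
    by_cases h : f i = v <;> simp [h, hP i, and_comm, lt_iff_le_and_ne]
  · ext i; simp [and_comm]

theorem Finset.sum_filter_le_sub_filter_lt_of_injOn {ι M N β : Type*} [DecidableEq ι]
    [AddCommMonoid M] [AddCommGroup N] [LinearOrder β] (G : M → N) (q : ι → M) {h : ι → β}
    (s : Finset ι) (hinj : Set.InjOn h s) :
    ∑ x ∈ s, (G (∑ i ∈ s with h i ≤ h x, q i) - G (∑ i ∈ s with h i < h x, q i)) =
      G (∑ i ∈ s, q i) - G 0 := by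
  induction s using Finset.induction_on_max_value h with
  | empty => simp
  | insert a s ha hmax ih =>
    rw [coe_insert] at hinj
    have hlt : ∀ x ∈ s, h x < h a := fun x hx => (hmax x hx).lt_of_ne fun hxa =>
      ha (hinj (Set.mem_insert_of_mem a hx) (Set.mem_insert a s) hxa ▸ hx)
    have hle_a : (insert a s).filter (fun i => h i ≤ h a) = insert a s :=
      filter_true_of_mem fun i hi => (mem_insert.1 hi).elim (fun hia => hia ▸ le_rfl) (hmax i)
    have hlt_a : (insert a s).filter (fun i => h i < h a) = s := by
      rw [filter_insert, if_neg (lt_irrefl _), filter_true_of_mem hlt]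
    have hrest : ∀ x ∈ s,
        G (∑ i ∈ insert a s with h i ≤ h x, q i) - G (∑ i ∈ insert a s with h i < h x, q i) =
          G (∑ i ∈ s with h i ≤ h x, q i) - G (∑ i ∈ s with h i < h x, q i) := fun x hx => by
      rw [filter_insert, if_neg (not_le.2 (hlt x hx)), filter_insert,
        if_neg (not_lt.2 (hlt x hx).le)]
    rw [sum_insert ha, hle_a, hlt_a, sum_congr rfl hrest, ih (hinj.mono (Set.subset_insert a s))]
    abel

theorem Finset.sum_filter_le_eq_sum_filter_lt_add {ι M β : Type*} [AddCommMonoid M]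
    [LinearOrder β] (s : Finset ι) (f : ι → β) (v : β) (q : ι → M) :
    ∑ i ∈ s with f i ≤ v, q i = ∑ i ∈ s with f i < v, q i + ∑ i ∈ s with f i = v, q i := by
  rw [s.sum_filter_eq_sum_lt_add_sum_filter_eq f v (fun i hi => (Ne.le_iff_lt hi)) q]
  congr 1
  exact sum_congr (filter_congr fun i _ => and_iff_left_of_imp le_of_eq) fun _ _ => rfl

theorem Real.sum_rpow_mul_rpow_one_sub_uniform {ι : Type*} {s : Finset ι} (hs : s.Nonempty)
    {a b : ℝ} (ha : 0 ≤ a) (hb : 0 ≤ b) (α : ℝ) :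
    ∑ _x ∈ s, ((1 / #s) * a) ^ α * ((1 / #s) * b) ^ (1 - α) = a ^ α * b ^ (1 - α) := by
  have hn : (0 : ℝ) < #s := by exact_mod_cast hs.card_pos
  have hn' : (0 : ℝ) ≤ 1 / #s := by positivity
  rw [sum_const, nsmul_eq_mul, Real.mul_rpow hn' ha, Real.mul_rpow hn' hb,
    mul_mul_mul_comm, ← Real.rpow_add (by positivity), add_sub_cancel, Real.rpow_one,
    ← mul_assoc, mul_one_div_cancel hn.ne', one_mul]

theorem renyiDiv_le_renyiDiv_of_sum_le {Γ Γ' : Type*} [Fintype Γ] [Fintype Γ'] {α : ℝ}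
    (hα : 1 ≤ α) {M N : Γ → ℝ} {M' N' : Γ' → ℝ}
    (hpos : 0 < ∑ x, M x ^ α * N x ^ (1 - α))
    (hle : ∑ x, M x ^ α * N x ^ (1 - α) ≤ ∑ x, M' x ^ α * N' x ^ (1 - α)) :
    renyiDiv α M N ≤ renyiDiv α M' N' :=
  mul_le_mul_of_nonneg_left (Real.log_le_log hpos hle) (one_div_nonneg.2 (sub_nonneg.2 hα))

section BestOfK

variable {Γ : Type*} [Fintype Γ]

/-- The probability that the best of `k` independent draws from `q` has score exactly `v`. -/
noncomputable def maxScoreProb (q g : Γ → ℝ) (k : ℕ) (v : ℝ) : ℝ :=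
  (∑ i with g i ≤ v, q i) ^ k - (∑ i with g i < v, q i) ^ k

theorem bestOfK_eq_mul_maxScoreProb (q g : Γ → ℝ) (k : ℕ) (x : Γ) :
    bestOfK q g k x = 1 / #{i | g i = g x} * maxScoreProb q g k (g x) :=
  rfl

theorem bestOfK_eq_maxScoreProb_of_injective (q : Γ → ℝ) {g : Γ → ℝ}
    (hg : Function.Injective g) (k : ℕ) (x : Γ) :
    bestOfK q g k x = maxScoreProb q g k (g x) := by
  have hx : ({i | g i = g x} : Finset Γ) = {x} := by
    ext i
    simp [hg.eq_iff]
  rw [bestOfK_eq_mul_maxScoreProb, hx, card_singleton, Nat.cast_one, div_one, one_mul]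

theorem maxScoreProb_nonneg {q : Γ → ℝ} (hq : ∀ i, 0 ≤ q i) (g : Γ → ℝ) (k : ℕ) (v : ℝ) :
    0 ≤ maxScoreProb q g k v := by
  rw [maxScoreProb, sum_filter_le_eq_sum_filter_lt_add, sub_nonneg]
  exact pow_le_pow_left₀ (sum_nonneg fun i _ => hq i)
    (le_add_of_nonneg_right (sum_nonneg fun i _ => hq i)) k

theorem maxScoreProb_pos {q : Γ → ℝ} (hq : ∀ i, 0 ≤ q i) (g : Γ → ℝ) {k : ℕ} (hk : k ≠ 0)
    {x : Γ} (hx : 0 < q x) : 0 < maxScoreProb q g k (g x) := by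
  rw [maxScoreProb, sum_filter_le_eq_sum_filter_lt_add, sub_pos]
  have hclass : 0 < ∑ i with g i = g x, q i :=
    hx.trans_le (single_le_sum (fun i _ => hq i) (by simp))
  exact pow_lt_pow_left₀ (lt_add_of_pos_right _ hclass) (sum_nonneg fun i _ => hq i) hk

theorem bestOfK_nonneg {q : Γ → ℝ} (hq : ∀ i, 0 ≤ q i) (g : Γ → ℝ) (k : ℕ) (x : Γ) :
    0 ≤ bestOfK q g k x := by
  rw [bestOfK_eq_mul_maxScoreProb]
  exact mul_nonneg (by positivity) (maxScoreProb_nonneg hq g k _)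

theorem bestOfK_pos {q : Γ → ℝ} (hq : ∀ i, 0 ≤ q i) (g : Γ → ℝ) {k : ℕ} (hk : k ≠ 0) {x : Γ}
    (hx : 0 < q x) : 0 < bestOfK q g k x := by
  have hcard : (0 : ℝ) < #{i | g i = g x} := by exact_mod_cast card_pos.2 ⟨x, by simp⟩
  rw [bestOfK_eq_mul_maxScoreProb]
  exact mul_pos (by positivity) (maxScoreProb_pos hq g hk hx)

variable {ghat gstar : Γ → ℝ}

theorem sum_bestOfK_level_of_refines (hinj : Function.Injective gstar)
    (href : ∀ x y, ghat x < ghat y → gstar x < gstar y) (q : Γ → ℝ) (k : ℕ) (v : ℝ) :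
    ∑ x with ghat x = v, bestOfK q gstar k x = maxScoreProb q ghat k v := by
  set B := ∑ i with ghat i < v, q i
  have hsplit : ∀ x, ghat x = v → ∀ r : ℝ → ℝ → Prop, [DecidableRel r] →
      (∀ i, ghat i ≠ v → (r (gstar i) (gstar x) ↔ ghat i < v)) →
      ∑ i with r (gstar i) (gstar x), q i =
        B + ∑ i ∈ {i | ghat i = v} with r (gstar i) (gstar x), q i := by
    intro x hx r _ hr
    rw [univ.sum_filter_eq_sum_lt_add_sum_filter_eq ghat v hr, filter_filter]
  -- outside the class of `v`, comparing `gstar` with a member of the class is comparing `ghat`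
  have hcompare : ∀ x, ghat x = v → ∀ i, ghat i ≠ v →
      (gstar i ≤ gstar x ↔ ghat i < v) ∧ (gstar i < gstar x ↔ ghat i < v) := by
    intro x hx i hi
    rcases hi.lt_or_gt with hlt | hgt
    · have := href i x (hx ▸ hlt)
      exact ⟨iff_of_true this.le hlt, iff_of_true this hlt⟩
    · have := href x i (hx ▸ hgt)
      exact ⟨iff_of_false (not_le.2 this) hgt.not_gt, iff_of_false this.not_gt hgt.not_gt⟩
  have hterm : ∀ x ∈ ({x | ghat x = v} : Finset Γ), bestOfK q gstar k x =
      (B + ∑ i ∈ {i | ghat i = v} with gstar i ≤ gstar x, q i) ^ k -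
        (B + ∑ i ∈ {i | ghat i = v} with gstar i < gstar x, q i) ^ k := by
    intro x hx
    have hx : ghat x = v := (mem_filter.1 hx).2
    rw [bestOfK_eq_maxScoreProb_of_injective q hinj, maxScoreProb,
      hsplit x hx _ fun i hi => (hcompare x hx i hi).1,
      hsplit x hx _ fun i hi => (hcompare x hx i hi).2]
  rw [sum_congr rfl hterm, sum_filter_le_sub_filter_lt_of_injOn (fun t => (B + t) ^ k) q _
      hinj.injOn, add_zero, maxScoreProb, sum_filter_le_eq_sum_filter_lt_add]

theorem sum_level_rpow_bestOfK_le (hinj : Function.Injective gstar)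
    (href : ∀ x y, ghat x < ghat y → gstar x < gstar y) {p p' : Γ → ℝ} (hp : ∀ x, 0 ≤ p x)
    (hp' : ∀ x, 0 < p' x) {k : ℕ} (hk : k ≠ 0) {α : ℝ} (hα : 1 ≤ α) {v : ℝ} (hv : ∃ x, ghat x = v) :
    ∑ x with ghat x = v, bestOfK p ghat k x ^ α * bestOfK p' ghat k x ^ (1 - α) ≤
      ∑ x with ghat x = v, bestOfK p gstar k x ^ α * bestOfK p' gstar k x ^ (1 - α) := by
  obtain ⟨x₀, hx₀⟩ := hv
  have hne : ({x | ghat x = v} : Finset Γ).Nonempty := ⟨x₀, by simp [hx₀]⟩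
  have hp'0 : ∀ x, 0 ≤ p' x := fun x => (hp' x).le
  calc ∑ x with ghat x = v, bestOfK p ghat k x ^ α * bestOfK p' ghat k x ^ (1 - α)
      = ∑ _x ∈ {x | ghat x = v}, (1 / #{i | ghat i = v} * maxScoreProb p ghat k v) ^ α *
          (1 / #{i | ghat i = v} * maxScoreProb p' ghat k v) ^ (1 - α) :=
        sum_congr rfl fun x hx => by
          rw [bestOfK_eq_mul_maxScoreProb, bestOfK_eq_mul_maxScoreProb, (mem_filter.1 hx).2]
    _ = maxScoreProb p ghat k v ^ α * maxScoreProb p' ghat k v ^ (1 - α) :=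
        Real.sum_rpow_mul_rpow_one_sub_uniform hne (maxScoreProb_nonneg hp ghat k v)
          (maxScoreProb_nonneg hp'0 ghat k v) α
    _ = (∑ x with ghat x = v, bestOfK p gstar k x) ^ α *
          (∑ x with ghat x = v, bestOfK p' gstar k x) ^ (1 - α) := by
        rw [sum_bestOfK_level_of_refines hinj href, sum_bestOfK_level_of_refines hinj href]
    _ ≤ _ := Real.rpow_sum_mul_rpow_sum_one_sub_le _ (fun x _ => bestOfK_nonneg hp gstar k x)
        (fun x _ => bestOfK_pos hp'0 gstar hk (hp' x)) hα

end BestOfK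

theorem stmt_2_general {Γ : Type*} [Fintype Γ] (p p' : Γ → ℝ) (hp0 : ∀ x, 0 ≤ p x)
    (hp1 : ∑ x, p x = 1) (hp'0 : ∀ x, 0 < p' x)
    (k : ℕ) (hk : 1 ≤ k) (α : ℝ) (hα : 1 < α)
    (ghat gstar : Γ → ℝ) (hinj : Function.Injective gstar)
    (href : ∀ x y, ghat x < ghat y → gstar x < gstar y) :
    renyiDiv α (bestOfK p ghat k) (bestOfK p' ghat k) ≤
      renyiDiv α (bestOfK p gstar k) (bestOfK p' gstar k) := by
  have hk0 : k ≠ 0 := Nat.one_le_iff_ne_zero.1 hk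
  obtain ⟨x₀, -, hx₀⟩ : ∃ x ∈ univ, (0 : ℝ) < p x := exists_lt_of_sum_lt (by simp [hp1])
  refine renyiDiv_le_renyiDiv_of_sum_le hα.le ?_ ?_
  · have hN : ∀ x, 0 < bestOfK p' ghat k x :=
      fun x => bestOfK_pos (fun x => (hp'0 x).le) ghat hk0 (hp'0 x)
    exact sum_pos'
      (fun x _ => mul_nonneg (Real.rpow_nonneg (bestOfK_nonneg hp0 ghat k x) _)
        (Real.rpow_nonneg (hN x).le _))
      ⟨x₀, mem_univ _, mul_pos (Real.rpow_pos_of_pos (bestOfK_pos hp0 ghat hk0 hx₀) _)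
        (Real.rpow_pos_of_pos (hN x₀) _)⟩
  · rw [← sum_fiberwise_of_maps_to (fun x _ => mem_image_of_mem ghat (mem_univ x)),
      ← sum_fiberwise_of_maps_to (fun x _ => mem_image_of_mem ghat (mem_univ x))]
    refine sum_le_sum fun v hv => sum_level_rpow_bestOfK_le hinj href hp0 hp'0 hk0 hα.le ?_
    obtain ⟨x, -, hx⟩ := mem_image.1 hv
    exact ⟨x, hx⟩

/-- merging output symbols sharing the same score can only decrease the
Rényi divergence of best-of-`k` selection distributions: for pmfs `p`, `p'` (with `p'`
strictly positive) on a finite type, `k ≥ 1`, `α > 1`, any score function `ĝ` and any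
injective score function `g*` refining the weak order of `ĝ`,
`D_α(F_{k,ĝ}[p] ‖ F_{k,ĝ}[p']) ≤ D_α(F_{k,g*}[p] ‖ F_{k,g*}[p'])`. -/
theorem stmt_2 {Γ : Type*} [Fintype Γ] (p p' : Γ → ℝ) (hp0 : ∀ x, 0 ≤ p x)
    (hp1 : ∑ x, p x = 1) (hp'0 : ∀ x, 0 < p' x) (hp'1 : ∑ x, p' x = 1)
    (k : ℕ) (hk : 1 ≤ k) (α : ℝ) (hα : 1 < α)
    (ghat gstar : Γ → ℝ) (hinj : Function.Injective gstar)
    (href : ∀ x y, ghat x < ghat y → gstar x < gstar y) :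
    renyiDiv α (bestOfK p ghat k) (bestOfK p' ghat k) ≤
      renyiDiv α (bestOfK p gstar k) (bestOfK p' gstar k) :=
  stmt_2_general p p' hp0 hp1 hp'0 k hk α hα ghat gstar hinj href
end

section
/- Let P be a probability measure on ℝ with density p with respect to Lebesgue measure and cumulative distribution function F(x) = P((−∞, x]), and let ξ be a probability mass function on the positive integers with finite mean Σ_{k≥1} k·ξ(k) < ∞. Define Q to be the mixture measure Q = Σ_{k≥1} ξ(k)·(the pushforward of the k-fold product measure P^{⊗k} on ℝ^k under the map (x_1, …, x_k) ↦ max_i x_i). Then Q is absolutely continuous with respect to Lebesgue measure with density x ↦ p(x)·ω_ξ(F(x)), i.e. Q equals the Lebesgue measure with density x ↦ p(x)·ω_ξ(F(x)). -/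
open MeasureTheory
open scoped ENNReal

/-- For a pmf `ξ` on the positive integers, `ω_ξ(x) = Σ_{k≥1} k·ξ(k)·x^{k−1}`. -/
noncomputable def omegaXi (ξ : ℕ+ → ℝ) (x : ℝ) : ℝ :=
  ∑' k : ℕ+, (k : ℝ) * ξ k * x ^ ((k : ℕ) - 1)

/-!
Coordinates of an i.i.d. sample from an atomless law are a.s. distinct, so up to a null set the
cube `{max ≤ t}` of `ℝᵏ` is the disjoint union over `j` of the events "`ω j` is the strict maximum
and `ω j ≤ t`". By Fubini each of these has mass `∫_{(-∞,t]} F^{k-1} dP`, hence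
`F(t)ᵏ = k ∫_{(-∞,t]} F^{k-1} dP`: the maximum of `k` samples has `P`-density `k F^{k-1}`.
Mixing over `ξ` (monotone convergence) and using `P = p · λ` gives the density
`p · Σ ξ(k) k F^{k-1}`; the finite mean makes this series summable on `[0,1]`, so it is `ω_ξ(F)`.
-/

open Set

section MaxOfIID

variable (P : Measure ℝ)

lemma pi_setOf_not_injective_eq_zero [SigmaFinite P] [NullSingletonClass P] (n : ℕ) :
    Measure.pi (fun _ : Fin (n + 1) => P) {ω | ¬ Function.Injective ω} = 0 := by
  have hsub : {ω : Fin (n + 1) → ℝ | ¬ Function.Injective ω}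
      ⊆ ⋃ i, ⋃ j, ⋃ (_ : j ≠ i), {ω | ω i = ω j} := by
    intro ω hω
    obtain ⟨i, j, hij, hne⟩ := Function.not_injective_iff.1 hω
    simp only [mem_iUnion]
    exact ⟨i, j, hne.symm, hij⟩
  refine measure_mono_null hsub (measure_iUnion_null fun i => measure_iUnion_null fun j =>
    measure_iUnion_null fun hji => ?_)
  obtain ⟨j, rfl⟩ := Fin.exists_succAbove_eq hji
  have hdiag : MeasurableSet {q : ℝ × (Fin n → ℝ) | q.1 = q.2 j} :=
    measurableSet_eq_fun measurable_fst ((measurable_pi_apply j).comp measurable_snd)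
  rw [← (measurePreserving_piFinSuccAbove (fun _ => P) i).symm.measure_preimage
    (by measurability), Measure.prod_apply_symm (by convert hdiag using 1; ext; simp)]
  simp

def strictMaxLE {n : ℕ} (j : Fin (n + 1)) (t : ℝ) : Set (Fin (n + 1) → ℝ) :=
  {ω | ω j ≤ t ∧ ∀ i ≠ j, ω i < ω j}

lemma measurableSet_strictMaxLE {n : ℕ} (j : Fin (n + 1)) (t : ℝ) :
    MeasurableSet (strictMaxLE j t) := by
  unfold strictMaxLE
  measurability

lemma pi_strictMaxLE_eq_setLIntegral [SigmaFinite P] [NullSingletonClass P] {n : ℕ}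
    (j : Fin (n + 1)) (t : ℝ) :
    Measure.pi (fun _ : Fin (n + 1) => P) (strictMaxLE j t)
      = ∫⁻ x in Iic t, P (Iic x) ^ n ∂P := by
  have hpre : (MeasurableEquiv.piFinSuccAbove (fun _ => ℝ) j).symm ⁻¹' strictMaxLE j t
      = {q : ℝ × (Fin n → ℝ) | q.1 ≤ t ∧ ∀ i, q.2 i < q.1} := by
    ext ⟨x, y⟩
    simp [strictMaxLE, MeasurableEquiv.piFinSuccAbove_symm_apply, Fin.insertNthEquiv,
      Fin.forall_iff_succAbove j]
  have hm : MeasurableSet {q : ℝ × (Fin n → ℝ) | q.1 ≤ t ∧ ∀ i, q.2 i < q.1} := by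
    measurability
  rw [← (measurePreserving_piFinSuccAbove (fun _ => P) j).symm.measure_preimage
    (measurableSet_strictMaxLE j t).nullMeasurableSet, hpre, Measure.prod_apply hm,
    ← lintegral_indicator measurableSet_Iic]
  refine lintegral_congr fun x => ?_
  by_cases hx : x ≤ t
  · have hslice : Prod.mk x ⁻¹' {q : ℝ × (Fin n → ℝ) | q.1 ≤ t ∧ ∀ i, q.2 i < q.1}
        = Set.pi univ fun _ => Iio x := by
      ext y
      simp [hx]
    simp [hslice, hx, Measure.pi_pi, measure_congr (Iio_ae_eq_Iic (μ := P))]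
  · simp [hx]

lemma iUnion_strictMaxLE_ae_eq_pi_Iic [SigmaFinite P] [NullSingletonClass P] (n : ℕ) (t : ℝ) :
    (⋃ j, strictMaxLE j t)
      =ᵐ[Measure.pi fun _ : Fin (n + 1) => P] Set.pi univ fun _ => Iic t := by
  refine (LE.le.eventuallyLE ?_).antisymm ?_
  · rintro ω ⟨_, ⟨j, rfl⟩, hj, hmax⟩ i -
    rcases eq_or_ne i j with rfl | hij
    · exact hj
    · exact ((hmax i hij).trans_le hj).le
  · refine (ae_iff.2 (pi_setOf_not_injective_eq_zero P n)).mono fun ω hinj hω => ?_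
    obtain ⟨j, hj⟩ := Finite.exists_max ω
    exact mem_iUnion.2 ⟨j, hω j trivial, fun i hij =>
      (hj i).lt_of_ne fun h => hij (hinj h)⟩

lemma measure_Iic_pow_succ_eq_mul_setLIntegral [IsFiniteMeasure P] [NullSingletonClass P]
    (n : ℕ) (t : ℝ) :
    P (Iic t) ^ (n + 1) = (n + 1 : ℕ) * ∫⁻ x in Iic t, P (Iic x) ^ n ∂P := by
  have hdisj : Pairwise (Function.onFun Disjoint fun j : Fin (n + 1) => strictMaxLE j t) :=
    fun j j' hjj' => disjoint_left.2 fun ω hω hω' =>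
      lt_asymm (hω.2 j' hjj'.symm) (hω'.2 j hjj')
  calc P (Iic t) ^ (n + 1)
      = Measure.pi (fun _ : Fin (n + 1) => P) (Set.pi univ fun _ => Iic t) := by
        rw [Measure.pi_pi]
        simp
    _ = Measure.pi (fun _ : Fin (n + 1) => P) (⋃ j, strictMaxLE j t) :=
        (measure_congr (iUnion_strictMaxLE_ae_eq_pi_Iic P n t)).symm
    _ = (n + 1 : ℕ) * ∫⁻ x in Iic t, P (Iic x) ^ n ∂P := by
        simp [measure_iUnion hdisj (measurableSet_strictMaxLE · t),
          pi_strictMaxLE_eq_setLIntegral]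

theorem map_iSup_pi_eq_withDensity [IsFiniteMeasure P] [NullSingletonClass P]
    (m : ℕ) [NeZero m] :
    (Measure.pi fun _ : Fin m => P).map (fun ω => ⨆ i, ω i)
      = P.withDensity fun x => m * P (Iic x) ^ (m - 1) := by
  obtain ⟨n, rfl⟩ := Nat.exists_eq_add_one_of_ne_zero (NeZero.ne m)
  have hmax : Measurable fun ω : Fin (n + 1) → ℝ => ⨆ i, ω i := by fun_prop
  refine Measure.ext_of_Iic _ _ fun t => ?_
  have hpre : (fun ω : Fin (n + 1) → ℝ => ⨆ i, ω i) ⁻¹' Iic t = Set.pi univ fun _ => Iic t := by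
    ext ω
    simpa only [mem_preimage, mem_Iic, mem_univ_pi] using ciSup_le_iff (Finite.bddAbove_range ω)
  have hΦ : Measurable fun x => P (Iic x) ^ n :=
    (Monotone.measurable fun _ _ hab => measure_mono (Iic_subset_Iic.2 hab)).pow_const n
  rw [Measure.map_apply hmax measurableSet_Iic, hpre, Measure.pi_pi,
    withDensity_apply _ measurableSet_Iic, Nat.add_sub_cancel, lintegral_const_mul _ hΦ]
  simpa using measure_Iic_pow_succ_eq_mul_setLIntegral P n t

end MaxOfIID

section OmegaXi

variable {ξ : ℕ+ → ℝ} {y : ℝ}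

lemma omegaXi_nonneg (hξ0 : ∀ k, 0 ≤ ξ k) (hy0 : 0 ≤ y) : 0 ≤ omegaXi ξ y :=
  tsum_nonneg fun k => by have := hξ0 k; positivity

lemma ofReal_omegaXi (hξ0 : ∀ k, 0 ≤ ξ k) (hmean : Summable fun k : ℕ+ => (k : ℝ) * ξ k)
    (hy0 : 0 ≤ y) (hy1 : y ≤ 1) :
    ENNReal.ofReal (omegaXi ξ y)
      = ∑' k : ℕ+, ENNReal.ofReal (ξ k) * (k * ENNReal.ofReal y ^ ((k : ℕ) - 1)) := by
  have hterm (k : ℕ+) : 0 ≤ (k : ℝ) * ξ k * y ^ ((k : ℕ) - 1) := by have := hξ0 k; positivity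
  have hsum : Summable fun k : ℕ+ => (k : ℝ) * ξ k * y ^ ((k : ℕ) - 1) :=
    hmean.of_nonneg_of_le hterm fun k =>
      mul_le_of_le_one_right (by have := hξ0 k; positivity) (pow_le_one₀ hy0 hy1)
  rw [omegaXi, ENNReal.ofReal_tsum_of_nonneg hterm hsum]
  refine tsum_congr fun k => ?_
  rw [ENNReal.ofReal_mul (by have := hξ0 k; positivity), ENNReal.ofReal_mul (by positivity),
    ENNReal.ofReal_pow hy0, ENNReal.ofReal_natCast]
  ring

end OmegaXi

theorem stmt_5_general (p : ℝ → ℝ) (hpm : Measurable p)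
    (P : Measure ℝ) [IsProbabilityMeasure P]
    (hP : P = volume.withDensity fun x => ENNReal.ofReal (p x))
    (F : ℝ → ℝ) (hF : ∀ x, F x = (P (Set.Iic x)).toReal)
    (ξ : ℕ+ → ℝ) (hξ0 : ∀ k, 0 ≤ ξ k)
    (hmean : Summable fun k : ℕ+ => (k : ℝ) * ξ k)
    (Q : Measure ℝ)
    (hQ : Q = Measure.sum fun k : ℕ+ =>
        ENNReal.ofReal (ξ k) • Measure.map (fun ω : Fin (k : ℕ) → ℝ => ⨆ i, ω i)
          (Measure.pi fun _ : Fin (k : ℕ) => P)) :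
    Q = volume.withDensity fun x => ENNReal.ofReal (p x * omegaXi ξ (F x)) := by
  have : NullSingletonClass P :=
    ⟨fun x => hP ▸ withDensity_absolutelyContinuous _ _ (Real.volume_singleton)⟩
  have hF01 (x : ℝ) : 0 ≤ F x ∧ F x ≤ 1 := by
    rw [hF]
    exact ⟨ENNReal.toReal_nonneg,
      ENNReal.toReal_le_of_le_ofReal zero_le_one (by simpa using prob_le_one)⟩
  have hCDF (x : ℝ) : ENNReal.ofReal (F x) = P (Iic x) := by
    rw [hF, ENNReal.ofReal_toReal (measure_ne_top P _)]
  have hFm : Measurable fun x => ENNReal.ofReal (F x) := by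
    simp_rw [hCDF]
    exact Monotone.measurable fun _ _ hab => measure_mono (Iic_subset_Iic.2 hab)
  calc Q = Measure.sum fun k : ℕ+ => P.withDensity fun x =>
        ENNReal.ofReal (ξ k) * (k * ENNReal.ofReal (F x) ^ ((k : ℕ) - 1)) := by
        simp_rw [hQ, map_iSup_pi_eq_withDensity, ← hCDF]
        congr! 2 with k
        rw [← withDensity_smul _ (by fun_prop)]
        rfl
    _ = P.withDensity fun x =>
        ∑' k : ℕ+, ENNReal.ofReal (ξ k) * (k * ENNReal.ofReal (F x) ^ ((k : ℕ) - 1)) := by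
        rw [← withDensity_tsum (by fun_prop)]
        exact congrArg _ (funext fun x => ENNReal.tsum_apply)
    _ = volume.withDensity fun x => ENNReal.ofReal (p x) *
        ∑' k : ℕ+, ENNReal.ofReal (ξ k) * (k * ENNReal.ofReal (F x) ^ ((k : ℕ) - 1)) := by
        rw [hP, ← withDensity_mul _ (by fun_prop) (.tsum fun k => by fun_prop)]
        rfl
    _ = volume.withDensity fun x => ENNReal.ofReal (p x * omegaXi ξ (F x)) := by
        simp_rw [ENNReal.ofReal_mul' (omegaXi_nonneg hξ0 (hF01 _).1),
          ofReal_omegaXi hξ0 hmean (hF01 _).1 (hF01 _).2]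

/-- let `P` be a probability measure on `ℝ` with density `p` w.r.t. Lebesgue
measure and CDF `F`, and let `ξ` be a pmf on the positive integers with finite mean. If
`Q = Σ_{k≥1} ξ(k)·(pushforward of `P^{⊗k}` under the max map)`, then `Q` has density
`x ↦ p(x)·ω_ξ(F(x))` w.r.t. Lebesgue measure. -/
theorem stmt_5 (p : ℝ → ℝ) (hp0 : ∀ x, 0 ≤ p x) (hpm : Measurable p)
    (P : Measure ℝ) [IsProbabilityMeasure P]
    (hP : P = volume.withDensity fun x => ENNReal.ofReal (p x))
    (F : ℝ → ℝ) (hF : ∀ x, F x = (P (Set.Iic x)).toReal)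
    (ξ : ℕ+ → ℝ) (hξ0 : ∀ k, 0 ≤ ξ k) (hξ1 : ∑' k, ξ k = 1)
    (hmean : Summable fun k : ℕ+ => (k : ℝ) * ξ k)
    (Q : Measure ℝ)
    (hQ : Q = Measure.sum fun k : ℕ+ =>
        ENNReal.ofReal (ξ k) • Measure.map (fun ω : Fin (k : ℕ) → ℝ => ⨆ i, ω i)
          (Measure.pi fun _ : Fin (k : ℕ) => P)) :
    Q = volume.withDensity fun x => ENNReal.ofReal (p x * omegaXi ξ (F x)) :=
  stmt_5_general p hpm P hP F hF ξ hξ0 hmean Q hQ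
end

section
/- Let P and P' be probability measures on ℝ with cumulative distribution functions F and F', let f : [0,1] → [0,1], and assume the pair (P, P') satisfies the trade-off bound f. Then F'(o) ≥ f(1 − F(o)) for every o ∈ ℝ. Consequently, if ω : [0,1] → ℝ is nonnegative and nondecreasing with ω(f(a)) > 0 for all a ∈ [0,1], and M = sup_{a ∈ [0,1]} ω(1−a)/ω(f(a)) is finite, then ω(F(o)) ≤ M·ω(F'(o)) for every o ∈ ℝ. -/
/-
Testing with the indicator of the upper tail `(o, ∞)` has type I error `1 - F(o)` and
type II error `F'(o)`, so the trade-off bound gives `f(1 - F(o)) ≤ F'(o)`. For the weighted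
bound put `a = 1 - F(o)`: then `ω(F(o)) = ω(1 - a) ≤ M ω(f(a)) ≤ M ω(F'(o))`, the last step
by monotonicity of `ω`.
-/

open MeasureTheory

/-- The pair `(P, P')` satisfies the trade-off bound `f` if every randomized test (a
measurable `φ` with values in `[0,1]`) has type II error `∫ (1−φ) dP'` at least `f`
evaluated at its type I error `∫ φ dP`. -/
def SatisfiesTradeoff {Ω : Type*} [MeasurableSpace Ω] (P P' : Measure Ω)
    (f : ℝ → ℝ) : Prop :=
  ∀ φ : Ω → ℝ, Measurable φ → (∀ ω, φ ω ∈ Set.Icc (0 : ℝ) 1) →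
    f (∫ ω, φ ω ∂P) ≤ ∫ ω, (1 - φ ω) ∂P'

theorem SatisfiesTradeoff.measureReal_le {Ω : Type*} [MeasurableSpace Ω] {P P' : Measure Ω}
    {f : ℝ → ℝ} (h : SatisfiesTradeoff P P' f) {s : Set Ω} (hs : MeasurableSet s) :
    f (P.real s) ≤ P'.real sᶜ := by
  have htest : ∀ x, s.indicator (1 : Ω → ℝ) x ∈ Set.Icc (0 : ℝ) 1 := fun x => by
    by_cases hx : x ∈ s <;> simp [hx]
  have hII : ∫ x, (1 - s.indicator (1 : Ω → ℝ) x) ∂P' = P'.real sᶜ := by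
    rw [← integral_indicator_one hs.compl, Set.indicator_compl]
    rfl
  simpa only [integral_indicator_one hs, hII] using
    h _ (measurable_one.indicator hs) htest

theorem SatisfiesTradeoff.le_cdf {P P' : Measure ℝ} [IsProbabilityMeasure P] {f : ℝ → ℝ}
    (h : SatisfiesTradeoff P P' f) (o : ℝ) :
    f (1 - P.real (Set.Iic o)) ≤ P'.real (Set.Iic o) := by
  simpa [← probReal_compl_eq_one_sub measurableSet_Iic, Set.compl_Ioi] using
    h.measureReal_le (measurableSet_Ioi (a := o))

theorem measureReal_mem_Icc {α : Type*} [MeasurableSpace α] {μ : Measure α}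
    [IsProbabilityMeasure μ] (s : Set α) : μ.real s ∈ Set.Icc (0 : ℝ) 1 :=
  ⟨measureReal_nonneg, measureReal_le_one⟩

/-- if `(P, P')` satisfies the trade-off bound `f : [0,1] → [0,1]`, then the
CDFs satisfy `F'(o) ≥ f(1 − F(o))` for every `o`; consequently, if `ω : [0,1] → ℝ` is
nonnegative and nondecreasing with `ω(f(a)) > 0` for all `a ∈ [0,1]`, and
`M = sup_{a∈[0,1]} ω(1−a)/ω(f(a))` is finite (a least upper bound exists), then
`ω(F(o)) ≤ M·ω(F'(o))` for every `o`. -/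
theorem stmt_6 (P P' : Measure ℝ) [IsProbabilityMeasure P] [IsProbabilityMeasure P']
    (F F' : ℝ → ℝ) (hF : ∀ x, F x = (P (Set.Iic x)).toReal)
    (hF' : ∀ x, F' x = (P' (Set.Iic x)).toReal)
    (f : ℝ → ℝ) (hfmaps : ∀ x ∈ Set.Icc (0 : ℝ) 1, f x ∈ Set.Icc (0 : ℝ) 1)
    (htrade : SatisfiesTradeoff P P' f)
    (ω : ℝ → ℝ) (hω0 : ∀ x ∈ Set.Icc (0 : ℝ) 1, 0 ≤ ω x)
    (hωmono : MonotoneOn ω (Set.Icc (0 : ℝ) 1))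
    (hωf : ∀ a ∈ Set.Icc (0 : ℝ) 1, 0 < ω (f a))
    (M : ℝ)
    (hM : IsLUB ((fun a => ω (1 - a) / ω (f a)) '' Set.Icc (0 : ℝ) 1) M) :
    (∀ o : ℝ, f (1 - F o) ≤ F' o) ∧ ∀ o : ℝ, ω (F o) ≤ M * ω (F' o) := by
  have hcdf : ∀ o, f (1 - F o) ≤ F' o := fun o => by
    simpa only [hF, hF', measureReal_def] using htrade.le_cdf o
  refine ⟨hcdf, fun o => ?_⟩
  have hFo : F o ∈ Set.Icc (0 : ℝ) 1 := hF o ▸ measureReal_mem_Icc (Set.Iic o)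
  have hF'o : F' o ∈ Set.Icc (0 : ℝ) 1 := hF' o ▸ measureReal_mem_Icc (Set.Iic o)
  set a := 1 - F o
  have ha : a ∈ Set.Icc (0 : ℝ) 1 := ⟨by linarith [hFo.2], by linarith [hFo.1]⟩
  have hFa : F o = 1 - a := by ring
  have hωfa : 0 < ω (f a) := hωf a ha
  have hratio : ω (1 - a) / ω (f a) ≤ M := hM.1 ⟨a, ha, rfl⟩
  have hM0 : 0 ≤ M := (div_nonneg (hω0 _ (hFa ▸ hFo)) hωfa.le).trans hratio
  calc ω (F o) = ω (1 - a) / ω (f a) * ω (f a) := by rw [hFa, div_mul_cancel₀ _ hωfa.ne']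
    _ ≤ M * ω (f a) := by gcongr
    _ ≤ M * ω (F' o) := by gcongr; exact hωmono (hfmaps a ha) hF'o (hcdf o)
end

section
/- Let P and P' be probability measures on ℝ with densities p and p' with respect to Lebesgue measure and cumulative distribution functions F and F'. Let ω : [0,1] → ℝ be nonnegative and nondecreasing with ω(1) > 0, and let M ≥ 1 be a constant such that ω(F(o)) ≤ M·ω(F'(o)) for every o ∈ ℝ. Define q(o) = p(o)·ω(F(o)) and q'(o) = p'(o)·ω(F'(o)), and let Q be the measure on ℝ with density q with respect to Lebesgue measure. Define the privacy loss functions ℓ(o) = log(p(o)/p'(o)) and ℓ_Q(o) = log(q(o)/q'(o)), with the convention that the value is +∞ when the denominator vanishes and the numerator is positive. If ε ≥ 0 and δ ≥ 0 satisfy ∫_ε^∞ e^{ε−z}·P({o : ℓ(o) > z}) dz ≤ δ, then, with ε_H = ε + log M, ∫_{ε_H}^∞ e^{ε_H−z}·Q({o : ℓ_Q(o) > z}) dz ≤ ω(1)·δ. -/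
open MeasureTheory
open scoped ENNReal

/-!
Since `ω` is monotone and `F ≤ 1`, the density `q = p · ω(F)` is at most `ω(1) · p`, so
`Q ≤ ω(1) · P`. Since `ω(F) ≤ M · ω(F')`, the event `ℓ_Q > z` forces `ℓ > z - log M`.
Substituting `z ↦ z + log M` in the tail integral then gives the bound.
-/

theorem MeasureTheory.Measure.withDensity_le_smul_withDensity {α : Type*} [MeasurableSpace α]
    {μ : Measure α} {f g : α → ℝ≥0∞} {r : ℝ≥0∞} (hr : r ≠ ∞) (hgf : g ≤ᵐ[μ] r • f) :
    μ.withDensity g ≤ r • μ.withDensity f := by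
  rw [← withDensity_smul' r f hr]
  exact withDensity_mono hgf

theorem setLIntegral_Ioi_add_comp_sub (f : ℝ → ℝ≥0∞) (a c : ℝ) :
    ∫⁻ z in Set.Ioi (a + c), f (z - c) = ∫⁻ z in Set.Ioi a, f z := by
  rw [← (measurePreserving_sub_right volume c).setLIntegral_comp_preimage_emb
    (measurableEmbedding_subRight c) f (Set.Ioi a)]
  congr 2
  ext z
  simp

theorem setLIntegral_Ioi_kernel_mul_le_of_le_shift (k g h : ℝ → ℝ≥0∞) {r : ℝ≥0∞} (hr : r ≠ ∞)
    (a c : ℝ) (hgh : ∀ z, g z ≤ r * h (z - c)) :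
    ∫⁻ z in Set.Ioi (a + c), k (a + c - z) * g z ≤
      r * ∫⁻ z in Set.Ioi a, k (a - z) * h z := calc
  _ ≤ ∫⁻ z in Set.Ioi (a + c), r * (k (a - (z - c)) * h (z - c)) := by
    refine lintegral_mono fun z => ?_
    rw [show a - (z - c) = a + c - z by ring, mul_left_comm]
    exact mul_le_mul_right (hgh z) _
  _ = r * ∫⁻ z in Set.Ioi a, k (a - z) * h z := by
    rw [lintegral_const_mul' _ _ hr, setLIntegral_Ioi_add_comp_sub (fun z => k (a - z) * h z)]

theorem mul_lt_mul_of_mul_mul_lt_of_le_mul {x a b w w' M : ℝ} (ha : 0 ≤ a) (hw' : 0 ≤ w')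
    (hww' : w ≤ M * w') (h : x * (b * w') < a * w) : x * b < M * a := by
  rcases hw'.eq_or_lt with rfl | hw'
  · nlinarith
  · nlinarith

theorem stmt_7_general (p p' : ℝ → ℝ) (hp0 : ∀ x, 0 ≤ p x)
    (P P' : Measure ℝ) [IsProbabilityMeasure P] [IsProbabilityMeasure P']
    (hP : P = volume.withDensity fun x => ENNReal.ofReal (p x))
    (F F' : ℝ → ℝ) (hF : ∀ x, F x = (P (Set.Iic x)).toReal)
    (hF' : ∀ x, F' x = (P' (Set.Iic x)).toReal)
    (ω : ℝ → ℝ) (hω0 : ∀ x ∈ Set.Icc (0 : ℝ) 1, 0 ≤ ω x)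
    (hωmono : MonotoneOn ω (Set.Icc (0 : ℝ) 1)) (hω1 : 0 < ω 1)
    (M : ℝ) (hM : 1 ≤ M) (hdom : ∀ o : ℝ, ω (F o) ≤ M * ω (F' o))
    (q q' : ℝ → ℝ) (hq : ∀ o, q o = p o * ω (F o)) (hq' : ∀ o, q' o = p' o * ω (F' o))
    (Q : Measure ℝ) (hQ : Q = volume.withDensity fun o => ENNReal.ofReal (q o))
    (ε δ : ℝ)
    (hcond : ∫⁻ z in Set.Ioi ε, ENNReal.ofReal (Real.exp (ε - z)) *
        P {o | Real.exp z * p' o < p o} ≤ ENNReal.ofReal δ) :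
    ∫⁻ z in Set.Ioi (ε + Real.log M),
        ENNReal.ofReal (Real.exp (ε + Real.log M - z)) *
          Q {o | Real.exp z * q' o < q o} ≤ ENNReal.ofReal (ω 1 * δ) := by
  have hM0 : 0 < M := by linarith
  have hF01 (o : ℝ) : F o ∈ Set.Icc (0 : ℝ) 1 := hF o ▸ ⟨measureReal_nonneg, measureReal_le_one⟩
  have hF'01 (o : ℝ) : F' o ∈ Set.Icc (0 : ℝ) 1 :=
    hF' o ▸ ⟨measureReal_nonneg, measureReal_le_one⟩
  have hQP (s : Set ℝ) : Q s ≤ ENNReal.ofReal (ω 1) * P s := by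
    rw [hQ, hP, ← smul_eq_mul, ← Measure.smul_apply]
    refine Measure.withDensity_le_smul_withDensity ENNReal.ofReal_ne_top
      (ae_of_all _ fun o => ?_) s
    have hωF : ω (F o) ≤ ω 1 := hωmono (hF01 o) ⟨zero_le_one, le_rfl⟩ (hF01 o).2
    rw [Pi.smul_apply, smul_eq_mul, ← ENNReal.ofReal_mul hω1.le, hq]
    exact ENNReal.ofReal_le_ofReal (by nlinarith [hp0 o])
  have hlevel (z : ℝ) :
      {o | Real.exp z * q' o < q o} ⊆ {o | Real.exp (z - Real.log M) * p' o < p o} := by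
    intro o ho
    rw [Set.mem_ofPred_eq, hq, hq'] at ho
    have := mul_lt_mul_of_mul_mul_lt_of_le_mul (hp0 o) (hω0 _ (hF'01 o)) (hdom o) ho
    rw [Set.mem_ofPred_eq, Real.exp_sub, Real.exp_log hM0, div_mul_eq_mul_div, div_lt_iff₀ hM0]
    linarith
  calc _ ≤ ENNReal.ofReal (ω 1) * ∫⁻ z in Set.Ioi ε,
          ENNReal.ofReal (Real.exp (ε - z)) * P {o | Real.exp z * p' o < p o} :=
        setLIntegral_Ioi_kernel_mul_le_of_le_shift (fun t => ENNReal.ofReal (Real.exp t)) _ _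
          ENNReal.ofReal_ne_top _ _
          fun z => (hQP _).trans (mul_le_mul_right (measure_mono (hlevel z)) _)
    _ ≤ ENNReal.ofReal (ω 1) * ENNReal.ofReal δ := mul_le_mul_right hcond _
    _ = ENNReal.ofReal (ω 1 * δ) := (ENNReal.ofReal_mul hω1.le).symm

/-- let `P`, `P'` be probability measures on `ℝ` with Lebesgue densities
`p`, `p'` and CDFs `F`, `F'`. Let `ω : [0,1] → ℝ` be nonnegative and nondecreasing with
`ω(1) > 0`, and `M ≥ 1` with `ω(F(o)) ≤ M·ω(F'(o))` for all `o`. Let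
`q = p·(ω∘F)`, `q' = p'·(ω∘F')`, and `Q` the measure with Lebesgue density `q`. If
`∫_ε^∞ e^{ε−z}·P({o : ℓ(o) > z}) dz ≤ δ` (with the privacy loss `ℓ = log(p/p')`, and
`{o : ℓ(o) > z}` encoded as `{o : p(o) > e^z·p'(o)}`, which matches the `+∞` convention
when the denominator vanishes and the numerator is positive), then with
`ε_H = ε + log M`, `∫_{ε_H}^∞ e^{ε_H−z}·Q({o : ℓ_Q(o) > z}) dz ≤ ω(1)·δ`. -/
theorem stmt_7 (p p' : ℝ → ℝ) (hp0 : ∀ x, 0 ≤ p x) (hp'0 : ∀ x, 0 ≤ p' x)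
    (hpm : Measurable p) (hp'm : Measurable p')
    (P P' : Measure ℝ) [IsProbabilityMeasure P] [IsProbabilityMeasure P']
    (hP : P = volume.withDensity fun x => ENNReal.ofReal (p x))
    (hP' : P' = volume.withDensity fun x => ENNReal.ofReal (p' x))
    (F F' : ℝ → ℝ) (hF : ∀ x, F x = (P (Set.Iic x)).toReal)
    (hF' : ∀ x, F' x = (P' (Set.Iic x)).toReal)
    (ω : ℝ → ℝ) (hω0 : ∀ x ∈ Set.Icc (0 : ℝ) 1, 0 ≤ ω x)
    (hωmono : MonotoneOn ω (Set.Icc (0 : ℝ) 1)) (hω1 : 0 < ω 1)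
    (M : ℝ) (hM : 1 ≤ M) (hdom : ∀ o : ℝ, ω (F o) ≤ M * ω (F' o))
    (q q' : ℝ → ℝ) (hq : ∀ o, q o = p o * ω (F o)) (hq' : ∀ o, q' o = p' o * ω (F' o))
    (Q : Measure ℝ) (hQ : Q = volume.withDensity fun o => ENNReal.ofReal (q o))
    (ε δ : ℝ) (hε : 0 ≤ ε) (hδ : 0 ≤ δ)
    (hcond : ∫⁻ z in Set.Ioi ε, ENNReal.ofReal (Real.exp (ε - z)) *
        P {o | Real.exp z * p' o < p o} ≤ ENNReal.ofReal δ) :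
    ∫⁻ z in Set.Ioi (ε + Real.log M),
        ENNReal.ofReal (Real.exp (ε + Real.log M - z)) *
          Q {o | Real.exp z * q' o < q o} ≤ ENNReal.ofReal (ω 1 * δ) :=
  stmt_7_general p p' hp0 P P' hP F F' hF hF' ω hω0 hωmono hω1 M hM hdom q q' hq hq' Q hQ ε δ hcond
end

section
/- Let f : [0,1] → [0,1] be nonincreasing, and let P and P' be probability measures on ℝ with densities p and p' with respect to Lebesgue measure and cumulative distribution functions F and F'. Assume that both (P, P') and (P', P) satisfy the trade-off bound f. Let ξ be a probability mass function on the positive integers with ξ(1) > 0 and finite mean Σ_{k≥1} k·ξ(k) < ∞, and define the measures Q and Q' on ℝ with Lebesgue densities x ↦ p(x)·ω_ξ(F(x)) and x ↦ p'(x)·ω_ξ(F'(x)) respectively. Fix δ_H > 0, set δ = δ_H / ω_ξ(1), and let ε ≥ 0 satisfy f(x) ≥ 1 − δ − e^ε·x for all x ∈ [0,1]. Set ε_H = ε + sup_{a ∈ [0,1]} log(ω_ξ(1−a)/ω_ξ(f(a))). Then Q and Q' are (ε_H, δ_H)-indistinguishable in both orders, i.e. Q(S) ≤ e^{ε_H}·Q'(S)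 + δ_H and Q'(S) ≤ e^{ε_H}·Q(S) + δ_H for every measurable set S ⊆ ℝ. -/
open MeasureTheory
open scoped ENNReal

/-- Measures `μ` and `ν` are `(ε,δ)`-indistinguishable if `μ(S) ≤ e^ε·ν(S) + δ` for
every measurable set `S`. -/
def Indist {Ω : Type*} [MeasurableSpace Ω] (ε δ : ℝ) (μ ν : Measure Ω) : Prop :=
  ∀ S : Set Ω, MeasurableSet S →
    μ S ≤ ENNReal.ofReal (Real.exp ε) * ν S + ENNReal.ofReal δ

/-!
Testing the half-line `(x, ∞)` against the trade-off bound gives `f (1 - F x) ≤ F' x`, hence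
the pointwise density ratio `ω_ξ (F x) ≤ e^c ω_ξ (F' x)`, where `c` is the supremum in `ε_H`.
Testing arbitrary sets against the line `1 - δ - e^ε x` gives `P ≤ e^ε P' + δ` setwise, i.e.
`∫ (p - e^ε p')⁺ ≤ δ`. Splitting `p ≤ e^ε p' + (p - e^ε p')⁺` and bounding the weight
`ω_ξ (F)` by `ω_ξ 1` on the excess term gives `Q S ≤ e^(ε + c) Q' S + ω_ξ(1) δ`.
-/

open Set

section OmegaXi

variable {ξ : ℕ+ → ℝ}

lemma summable_omegaXi (hξ0 : ∀ k, 0 ≤ ξ k) (hmean : Summable fun k : ℕ+ => (k : ℝ) * ξ k)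
    {x : ℝ} (hx : x ∈ Icc (0 : ℝ) 1) :
    Summable fun k : ℕ+ => (k : ℝ) * ξ k * x ^ ((k : ℕ) - 1) :=
  hmean.of_nonneg_of_le (fun k => by have := hξ0 k; have := hx.1; positivity)
    fun k => mul_le_of_le_one_right (mul_nonneg (Nat.cast_nonneg _) (hξ0 k))
      (pow_le_one₀ hx.1 hx.2)

lemma omegaXi_mono (hξ0 : ∀ k, 0 ≤ ξ k) (hmean : Summable fun k : ℕ+ => (k : ℝ) * ξ k) :
    MonotoneOn (omegaXi ξ) (Icc 0 1) := fun _x hx _y hy hxy =>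
  (summable_omegaXi hξ0 hmean hx).tsum_le_tsum
    (fun k => mul_le_mul_of_nonneg_left (pow_le_pow_left₀ hx.1 hxy _)
      (mul_nonneg (Nat.cast_nonneg _) (hξ0 k)))
    (summable_omegaXi hξ0 hmean hy)

lemma le_omegaXi (hξ0 : ∀ k, 0 ≤ ξ k) (hmean : Summable fun k : ℕ+ => (k : ℝ) * ξ k)
    {x : ℝ} (hx : x ∈ Icc (0 : ℝ) 1) : ξ 1 ≤ omegaXi ξ x := by
  simpa [omegaXi] using (summable_omegaXi hξ0 hmean hx).le_tsum 1 fun k _ => by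
    have := hξ0 k; have := hx.1; positivity

end OmegaXi

lemma le_exp_sSup_log_div_mul {u v : ℝ → ℝ} {s : Set ℝ} {a : ℝ} (ha : a ∈ s)
    (hu : 0 < u a) (hv : 0 < v a) (hbdd : BddAbove ((fun a => Real.log (u a / v a)) '' s)) :
    u a ≤ Real.exp (sSup ((fun a => Real.log (u a / v a)) '' s)) * v a := by
  rw [← div_le_iff₀ hv, ← Real.exp_log (div_pos hu hv), Real.exp_le_exp]
  exact le_csSup hbdd (mem_image_of_mem _ ha)

namespace SatisfiesTradeoff

variable {Ω : Type*} [MeasurableSpace Ω] {μ ν : Measure Ω} {f : ℝ → ℝ}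

lemma le_measureReal_compl (h : SatisfiesTradeoff μ ν f) {T : Set Ω} (hT : MeasurableSet T) :
    f (μ.real T) ≤ ν.real Tᶜ := by
  have hφ : ∀ ω, T.indicator 1 ω ∈ Icc (0 : ℝ) 1 := fun ω => by
    by_cases hω : ω ∈ T <;> simp [hω]
  have := h _ (measurable_one.indicator hT) hφ
  have hcompl : ∀ ω, 1 - T.indicator 1 ω = Tᶜ.indicator (1 : Ω → ℝ) ω := fun ω => by
    simp [indicator_compl]
  simp_rw [hcompl] at this
  rwa [integral_indicator_one hT, integral_indicator_one hT.compl] at this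

lemma indist [IsProbabilityMeasure μ] [IsProbabilityMeasure ν] (h : SatisfiesTradeoff μ ν f)
    {ε δ : ℝ} (hεf : ∀ x ∈ Icc (0 : ℝ) 1, 1 - δ - Real.exp ε * x ≤ f x) :
    Indist ε δ ν μ := by
  intro T hT
  have hle : ν.real T ≤ δ + Real.exp ε * μ.real T := by
    have := h.le_measureReal_compl hT
    rw [probReal_compl_eq_one_sub hT] at this
    linarith [hεf (μ.real T) ⟨measureReal_nonneg, measureReal_le_one⟩]
  calc ν T = ENNReal.ofReal (ν.real T) := (ofReal_measureReal (measure_ne_top _ _)).symm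
    _ ≤ ENNReal.ofReal (Real.exp ε) * μ T + ENNReal.ofReal δ := by
      grw [hle, ENNReal.ofReal_add_le, ENNReal.ofReal_mul (Real.exp_nonneg ε),
        ofReal_measureReal (measure_ne_top _ _), add_comm]

lemma omegaXi_measureReal_le [IsProbabilityMeasure μ] [IsProbabilityMeasure ν]
    (h : SatisfiesTradeoff μ ν f) (hfmaps : ∀ x ∈ Icc (0 : ℝ) 1, f x ∈ Icc (0 : ℝ) 1)
    {ξ : ℕ+ → ℝ} (hξ0 : ∀ k, 0 ≤ ξ k) (hmean : Summable fun k : ℕ+ => (k : ℝ) * ξ k) {c : ℝ}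
    (hc : ∀ a ∈ Icc (0 : ℝ) 1, omegaXi ξ (1 - a) ≤ Real.exp c * omegaXi ξ (f a))
    {T : Set Ω} (hT : MeasurableSet T) :
    omegaXi ξ (μ.real T) ≤ Real.exp c * omegaXi ξ (ν.real T) := by
  have hTc : μ.real Tᶜ ∈ Icc (0 : ℝ) 1 := ⟨measureReal_nonneg, measureReal_le_one⟩
  have hf : f (μ.real Tᶜ) ≤ ν.real T := by
    simpa using h.le_measureReal_compl hT.compl
  calc omegaXi ξ (μ.real T) = omegaXi ξ (1 - μ.real Tᶜ) := by
        rw [probReal_compl_eq_one_sub hT, sub_sub_cancel]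
    _ ≤ Real.exp c * omegaXi ξ (f (μ.real Tᶜ)) := hc _ hTc
    _ ≤ Real.exp c * omegaXi ξ (ν.real T) := by
      gcongr
      exact omegaXi_mono hξ0 hmean (hfmaps _ hTc) ⟨measureReal_nonneg, measureReal_le_one⟩ hf

end SatisfiesTradeoff

section WithDensity

variable {α : Type*} [MeasurableSpace α] {μ : Measure α}

lemma lintegral_tsub_le_of_withDensity_le {ρ ρ' : α → ℝ≥0∞} (hρ : Measurable ρ)
    (hρ' : Measurable ρ') [IsFiniteMeasure (μ.withDensity ρ')] {a δ : ℝ≥0∞} (ha : a ≠ ∞)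
    (h : ∀ T, MeasurableSet T → μ.withDensity ρ T ≤ a * μ.withDensity ρ' T + δ) :
    ∫⁻ x, ρ x - a * ρ' x ∂μ ≤ δ := by
  set T := {x | a * ρ' x < ρ x}
  have hT : MeasurableSet T := measurableSet_lt (hρ'.const_mul a) hρ
  have hsupp : Function.support (fun x => ρ x - a * ρ' x) ⊆ T := fun x hx =>
    tsub_pos_iff_lt.1 (pos_iff_ne_zero.2 hx)
  have hfin : ∫⁻ x in T, a * ρ' x ∂μ ≠ ∞ := by
    rw [lintegral_const_mul _ hρ', ← withDensity_apply _ hT]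
    exact ENNReal.mul_ne_top ha (measure_ne_top _ _)
  rw [← setLIntegral_eq_of_support_subset hsupp,
    lintegral_sub (hρ'.const_mul a) hfin (ae_restrict_of_forall_mem hT fun x hx => le_of_lt hx),
    lintegral_const_mul _ hρ', ← withDensity_apply _ hT, ← withDensity_apply _ hT,
    tsub_le_iff_left]
  exact h T hT

lemma withDensity_mul_apply_le {ρ ρ' G G' : α → ℝ≥0∞} (hρ : Measurable ρ) (hρ' : Measurable ρ')
    (hG' : Measurable G') [IsFiniteMeasure (μ.withDensity ρ')] {a b M δ : ℝ≥0∞} (ha : a ≠ ∞)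
    (h : ∀ T, MeasurableSet T → μ.withDensity ρ T ≤ a * μ.withDensity ρ' T + δ)
    (hGM : ∀ x, G x ≤ M) (hGG' : ∀ x, G x ≤ b * G' x) {S : Set α} (hS : MeasurableSet S) :
    μ.withDensity (ρ * G) S ≤ a * b * μ.withDensity (ρ' * G') S + M * δ := by
  have hpt : ∀ x, ρ x * G x ≤ a * b * (ρ' x * G' x) + M * (ρ x - a * ρ' x) := fun x =>
    calc ρ x * G x ≤ (a * ρ' x + (ρ x - a * ρ' x)) * G x := by gcongr; exact le_add_tsub
      _ = a * ρ' x * G x + (ρ x - a * ρ' x) * G x := add_mul ..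
      _ ≤ a * ρ' x * (b * G' x) + (ρ x - a * ρ' x) * M := by gcongr <;> apply_assumption
      _ = a * b * (ρ' x * G' x) + M * (ρ x - a * ρ' x) := by ring
  have hρ'G' : Measurable fun x => ρ' x * G' x := hρ'.mul hG'
  have hexcess : Measurable fun x => ρ x - a * ρ' x := hρ.sub (hρ'.const_mul a)
  rw [withDensity_apply _ hS, withDensity_apply _ hS]
  calc ∫⁻ x in S, (ρ * G) x ∂μ
      ≤ ∫⁻ x in S, a * b * (ρ' x * G' x) + M * (ρ x - a * ρ' x) ∂μ := lintegral_mono hpt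
    _ = a * b * ∫⁻ x in S, ρ' x * G' x ∂μ + M * ∫⁻ x in S, ρ x - a * ρ' x ∂μ := by
      rw [lintegral_add_left (hρ'G'.const_mul _), lintegral_const_mul _ hρ'G',
        lintegral_const_mul _ hexcess]
    _ ≤ a * b * ∫⁻ x in S, ρ' x * G' x ∂μ + M * δ := by
      gcongr
      exact (setLIntegral_le_lintegral _ _).trans
        (lintegral_tsub_le_of_withDensity_le hρ hρ' ha h)

lemma Indist.withDensity_ofReal_mul {p p' g g' : α → ℝ} (hp : ∀ x, 0 ≤ p x)
    (hp' : ∀ x, 0 ≤ p' x) (hpm : Measurable p) (hp'm : Measurable p') (hg'm : Measurable g')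
    [IsFiniteMeasure (μ.withDensity fun x => ENNReal.ofReal (p' x))] {ε δ c M : ℝ}
    (h : Indist ε δ (μ.withDensity fun x => ENNReal.ofReal (p x))
      (μ.withDensity fun x => ENNReal.ofReal (p' x)))
    (hM : 0 ≤ M) (hgM : ∀ x, g x ≤ M) (hgg' : ∀ x, g x ≤ Real.exp c * g' x) :
    Indist (ε + c) (M * δ) (μ.withDensity fun x => ENNReal.ofReal (p x * g x))
      (μ.withDensity fun x => ENNReal.ofReal (p' x * g' x)) := by
  have hmul : ∀ {q : α → ℝ}, (∀ x, 0 ≤ q x) → ∀ k : α → ℝ,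
      (fun x => ENNReal.ofReal (q x * k x)) =
        (fun x => ENNReal.ofReal (q x)) * fun x => ENNReal.ofReal (k x) :=
    fun hq _ => funext fun x => ENNReal.ofReal_mul (hq x)
  intro S hS
  rw [hmul hp, hmul hp', Real.exp_add, ENNReal.ofReal_mul (Real.exp_nonneg _),
    ENNReal.ofReal_mul hM]
  exact withDensity_mul_apply_le hpm.ennreal_ofReal hp'm.ennreal_ofReal hg'm.ennreal_ofReal
    ENNReal.ofReal_ne_top h (fun x => ENNReal.ofReal_le_ofReal (hgM x))
    (fun x => (ENNReal.ofReal_le_ofReal (hgg' x)).trans_eq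
      (ENNReal.ofReal_mul (Real.exp_nonneg c))) hS

end WithDensity

lemma monotone_omegaXi_measureReal_Iic {ξ : ℕ+ → ℝ} (hξ0 : ∀ k, 0 ≤ ξ k)
    (hmean : Summable fun k : ℕ+ => (k : ℝ) * ξ k) (μ : Measure ℝ) [IsProbabilityMeasure μ] :
    Monotone fun x => omegaXi ξ (μ.real (Iic x)) := fun _x _y hxy =>
  omegaXi_mono hξ0 hmean ⟨measureReal_nonneg, measureReal_le_one⟩
    ⟨measureReal_nonneg, measureReal_le_one⟩ (measureReal_mono (Iic_subset_Iic.2 hxy))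

lemma bddAbove_log_omegaXi_div {ξ : ℕ+ → ℝ} (hξ0 : ∀ k, 0 ≤ ξ k) (hξone : 0 < ξ 1)
    (hmean : Summable fun k : ℕ+ => (k : ℝ) * ξ k) {f : ℝ → ℝ}
    (hfmaps : ∀ x ∈ Icc (0 : ℝ) 1, f x ∈ Icc (0 : ℝ) 1) :
    BddAbove ((fun a => Real.log (omegaXi ξ (1 - a) / omegaXi ξ (f a))) '' Icc (0 : ℝ) 1) := by
  refine ⟨Real.log (omegaXi ξ 1 / ξ 1), forall_mem_image.2 fun a ha => ?_⟩
  have h1a : 1 - a ∈ Icc (0 : ℝ) 1 := ⟨sub_nonneg.2 ha.2, sub_le_self _ ha.1⟩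
  have hnum := le_omegaXi hξ0 hmean h1a
  have hden := le_omegaXi hξ0 hmean (hfmaps a ha)
  have h1 : (1 : ℝ) ∈ Icc (0 : ℝ) 1 := right_mem_Icc.2 zero_le_one
  exact Real.log_le_log (div_pos (hξone.trans_le hnum) (hξone.trans_le hden))
    (div_le_div₀ (hξone.le.trans (le_omegaXi hξ0 hmean h1))
      (omegaXi_mono hξ0 hmean h1a h1 h1a.2) hξone hden)

theorem stmt_8_general (f : ℝ → ℝ)
    (hfmaps : ∀ x ∈ Set.Icc (0 : ℝ) 1, f x ∈ Set.Icc (0 : ℝ) 1)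
    (p p' : ℝ → ℝ) (hp0 : ∀ x, 0 ≤ p x) (hp'0 : ∀ x, 0 ≤ p' x)
    (hpm : Measurable p) (hp'm : Measurable p')
    (P P' : Measure ℝ) [IsProbabilityMeasure P] [IsProbabilityMeasure P']
    (hP : P = volume.withDensity fun x => ENNReal.ofReal (p x))
    (hP' : P' = volume.withDensity fun x => ENNReal.ofReal (p' x))
    (F F' : ℝ → ℝ) (hF : ∀ x, F x = (P (Set.Iic x)).toReal)
    (hF' : ∀ x, F' x = (P' (Set.Iic x)).toReal)
    (htrade : SatisfiesTradeoff P P' f) (htrade' : SatisfiesTradeoff P' P f)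
    (ξ : ℕ+ → ℝ) (hξ0 : ∀ k, 0 ≤ ξ k) (hξone : 0 < ξ 1)
    (hmean : Summable fun k : ℕ+ => (k : ℝ) * ξ k)
    (Q Q' : Measure ℝ)
    (hQ : Q = volume.withDensity fun x => ENNReal.ofReal (p x * omegaXi ξ (F x)))
    (hQ' : Q' = volume.withDensity fun x => ENNReal.ofReal (p' x * omegaXi ξ (F' x)))
    (δH : ℝ) (δ : ℝ) (hδ : δ = δH / omegaXi ξ 1)
    (ε : ℝ)
    (hεf : ∀ x ∈ Set.Icc (0 : ℝ) 1, 1 - δ - Real.exp ε * x ≤ f x)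
    (εH : ℝ)
    (hεH : εH = ε + sSup ((fun a => Real.log (omegaXi ξ (1 - a) / omegaXi ξ (f a))) ''
        Set.Icc (0 : ℝ) 1)) :
    Indist εH δH Q Q' ∧ Indist εH δH Q' Q := by
  have h1 : (1 : ℝ) ∈ Icc (0 : ℝ) 1 := right_mem_Icc.2 zero_le_one
  have hM : 0 < omegaXi ξ 1 := hξone.trans_le (le_omegaXi hξ0 hmean h1)
  have hδH : omegaXi ξ 1 * δ = δH := by rw [hδ]; field_simp
  set c := sSup ((fun a => Real.log (omegaXi ξ (1 - a) / omegaXi ξ (f a))) '' Icc (0 : ℝ) 1)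
  have hkey : ∀ a ∈ Icc (0 : ℝ) 1, omegaXi ξ (1 - a) ≤ Real.exp c * omegaXi ξ (f a) :=
    fun a ha => le_exp_sSup_log_div_mul (u := fun a => omegaXi ξ (1 - a))
      (v := fun a => omegaXi ξ (f a)) ha
      (hξone.trans_le (le_omegaXi hξ0 hmean ⟨sub_nonneg.2 ha.2, sub_le_self _ ha.1⟩))
      (hξone.trans_le (le_omegaXi hξ0 hmean (hfmaps a ha)))
      (bddAbove_log_omegaXi_div hξ0 hξone hmean hfmaps)
  have hω1 : ∀ (μ : Measure ℝ) [IsProbabilityMeasure μ] x,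
      omegaXi ξ (μ.real (Iic x)) ≤ omegaXi ξ 1 := fun μ _ x =>
    omegaXi_mono hξ0 hmean ⟨measureReal_nonneg, measureReal_le_one⟩ h1 measureReal_le_one
  obtain rfl : F = fun x => P.real (Iic x) := funext hF
  obtain rfl : F' = fun x => P'.real (Iic x) := funext hF'
  subst hP hP' hQ hQ' hεH
  rw [← hδH]
  exact ⟨(htrade'.indist hεf).withDensity_ofReal_mul hp0 hp'0 hpm hp'm
      (monotone_omegaXi_measureReal_Iic hξ0 hmean _).measurable hM.le (hω1 _)
      fun x => htrade.omegaXi_measureReal_le hfmaps hξ0 hmean hkey measurableSet_Iic,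
    (htrade.indist hεf).withDensity_ofReal_mul hp'0 hp0 hp'm hpm
      (monotone_omegaXi_measureReal_Iic hξ0 hmean _).measurable hM.le (hω1 _)
      fun x => htrade'.omegaXi_measureReal_le hfmaps hξ0 hmean hkey measurableSet_Iic⟩

/-- let `f : [0,1] → [0,1]` be nonincreasing and let `P`, `P'` be probability
measures on `ℝ` with Lebesgue densities `p`, `p'` and CDFs `F`, `F'`, such that both
`(P,P')` and `(P',P)` satisfy the trade-off bound `f`. Let `ξ` be a pmf on the positive
integers with `ξ(1) > 0` and finite mean, and let `Q`, `Q'` have Lebesgue densities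
`p·ω_ξ(F)`, `p'·ω_ξ(F')`. Fix `δ_H > 0`, set `δ = δ_H/ω_ξ(1)`, let `ε ≥ 0` satisfy
`f(x) ≥ 1 − δ − e^ε·x` on `[0,1]`, and set
`ε_H = ε + sup_{a∈[0,1]} log(ω_ξ(1−a)/ω_ξ(f(a)))`. Then `Q` and `Q'` are
`(ε_H, δ_H)`-indistinguishable in both orders. -/
theorem stmt_8 (f : ℝ → ℝ) (hfanti : AntitoneOn f (Set.Icc (0 : ℝ) 1))
    (hfmaps : ∀ x ∈ Set.Icc (0 : ℝ) 1, f x ∈ Set.Icc (0 : ℝ) 1)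
    (p p' : ℝ → ℝ) (hp0 : ∀ x, 0 ≤ p x) (hp'0 : ∀ x, 0 ≤ p' x)
    (hpm : Measurable p) (hp'm : Measurable p')
    (P P' : Measure ℝ) [IsProbabilityMeasure P] [IsProbabilityMeasure P']
    (hP : P = volume.withDensity fun x => ENNReal.ofReal (p x))
    (hP' : P' = volume.withDensity fun x => ENNReal.ofReal (p' x))
    (F F' : ℝ → ℝ) (hF : ∀ x, F x = (P (Set.Iic x)).toReal)
    (hF' : ∀ x, F' x = (P' (Set.Iic x)).toReal)
    (htrade : SatisfiesTradeoff P P' f) (htrade' : SatisfiesTradeoff P' P f)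
    (ξ : ℕ+ → ℝ) (hξ0 : ∀ k, 0 ≤ ξ k) (hξ1 : ∑' k, ξ k = 1) (hξone : 0 < ξ 1)
    (hmean : Summable fun k : ℕ+ => (k : ℝ) * ξ k)
    (Q Q' : Measure ℝ)
    (hQ : Q = volume.withDensity fun x => ENNReal.ofReal (p x * omegaXi ξ (F x)))
    (hQ' : Q' = volume.withDensity fun x => ENNReal.ofReal (p' x * omegaXi ξ (F' x)))
    (δH : ℝ) (hδH : 0 < δH) (δ : ℝ) (hδ : δ = δH / omegaXi ξ 1)
    (ε : ℝ) (hε : 0 ≤ ε)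
    (hεf : ∀ x ∈ Set.Icc (0 : ℝ) 1, 1 - δ - Real.exp ε * x ≤ f x)
    (εH : ℝ)
    (hεH : εH = ε + sSup ((fun a => Real.log (omegaXi ξ (1 - a) / omegaXi ξ (f a))) ''
        Set.Icc (0 : ℝ) 1)) :
    Indist εH δH Q Q' ∧ Indist εH δH Q' Q :=
  stmt_8_general f hfmaps p p' hp0 hp'0 hpm hp'm P P' hP hP' F F' hF hF' htrade htrade' ξ hξ0 hξone
    hmean Q Q' hQ hQ' δH δ hδ ε hεf εH hεH
end

section
/- Let μ > 0 and let P and P' be probability measures on ℝ with densities p and p' with respect to Lebesgue measure and cumulative distribution functions F and F'. Assume that both (P, P') and (P', P) satisfy the trade-off bound G_μ. Let ξ be a probability mass function on the positive integers with ξ(1) > 0 and finite mean Σ_{k≥1} k·ξ(k) < ∞, and define the measures Q and Q' on ℝ with Lebesgue densities x ↦ p(x)·ω_ξ(F(x)) and x ↦ p'(x)·ω_ξ(F'(x)) respectively. Fix δ_H > 0 and let ε ≥ 0 satisfy δ_H / ω_ξ(1) = Φ(−ε/μ + μ/2) − e^ε·Φ(−ε/μ − μ/2). Set ε_H = ε +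 sup_{a ∈ [0,1]} log(ω_ξ(1−a)/ω_ξ(G_μ(a))). Then Q and Q' are (ε_H, δ_H)-indistinguishable in both orders, i.e. Q(S) ≤ e^{ε_H}·Q'(S) + δ_H and Q'(S) ≤ e^{ε_H}·Q(S) + δ_H for every measurable set S ⊆ ℝ. -/
open MeasureTheory
open scoped ENNReal

/-- `Φ`, the CDF of the standard Gaussian measure `N(0,1)` on `ℝ`. -/
noncomputable def stdGaussianCDF (x : ℝ) : ℝ :=
  ((ProbabilityTheory.gaussianReal 0 1) (Set.Iic x)).toReal

/-- `Φ⁻¹`, the inverse of the standard Gaussian CDF (on `(0,1)`). -/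
noncomputable def stdGaussianCDFInv : ℝ → ℝ := Function.invFun stdGaussianCDF

/-- `G_μ(x) = Φ(Φ⁻¹(1−x) − μ)` for `x ∈ (0,1)`, with `G_μ(0) = 1` and `G_μ(1) = 0`. -/
noncomputable def Gmu (μ : ℝ) (x : ℝ) : ℝ :=
  if x ≤ 0 then 1 else if 1 ≤ x then 0
  else stdGaussianCDF (stdGaussianCDFInv (1 - x) - μ)

open ProbabilityTheory Real Filter

lemma Phi_nonneg (x : ℝ) : 0 ≤ stdGaussianCDF x := ENNReal.toReal_nonneg

lemma Phi_le_one (x : ℝ) : stdGaussianCDF x ≤ 1 := by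
  have h := prob_le_one (μ := gaussianReal 0 1) (s := Set.Iic x)
  simpa [stdGaussianCDF] using ENNReal.toReal_mono (by simp) h

lemma Phi_mono : Monotone stdGaussianCDF := fun a b h =>
  ENNReal.toReal_mono (measure_ne_top _ _) (measure_mono (Set.Iic_subset_Iic.2 h))

lemma gauss_Ioc (m a b : ℝ) :
    gaussianReal m 1 (Set.Ioc a b) = ∫⁻ t in Set.Ioc a b, ENNReal.ofReal (gaussianPDFReal m 1 t) := by
  rw [gaussianReal_apply m (by norm_num) (Set.Ioc a b)]
  rfl

lemma Phi_diff {a b : ℝ} (h : a ≤ b) :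
    stdGaussianCDF b - stdGaussianCDF a = ((gaussianReal 0 1) (Set.Ioc a b)).toReal := by
  have hu : (gaussianReal 0 1) (Set.Iic a) + (gaussianReal 0 1) (Set.Ioc a b)
      = (gaussianReal 0 1) (Set.Iic b) := by
    rw [← measure_union (Set.Iic_disjoint_Ioc le_rfl) measurableSet_Ioc, Set.Iic_union_Ioc_eq_Iic h]
  have := congrArg ENNReal.toReal hu
  rw [ENNReal.toReal_add (measure_ne_top _ _) (measure_ne_top _ _)] at this
  simp only [stdGaussianCDF]
  linarith

lemma gauss_shift (m a b : ℝ) :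
    gaussianReal m 1 (Set.Ioc a b) = gaussianReal 0 1 (Set.Ioc (a - m) (b - m)) := by
  have hmap : (gaussianReal 0 1).map (· + m) = gaussianReal m 1 := by
    simpa using gaussianReal_map_add_const (μ := 0) (v := 1) m
  rw [← hmap, Measure.map_apply (measurable_add_const m) measurableSet_Ioc]
  congr 1
  ext x
  simp only [Set.mem_preimage, Set.mem_Ioc]
  constructor <;> intro ⟨h1, h2⟩ <;> constructor <;> linarith

lemma pdf_ratio_ge {μ ε : ℝ} (hμ : 0 < μ) {t : ℝ} (h : -(ε/μ) + μ/2 ≤ t) :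
    gaussianPDFReal 0 1 t ≤ Real.exp ε * gaussianPDFReal μ 1 t := by
  simp only [gaussianPDFReal, NNReal.coe_one, mul_one, sub_zero]
  have hc : (0:ℝ) ≤ (√(2 * π))⁻¹ := by positivity
  have : (√(2*π))⁻¹ * rexp (-t ^ 2 / 2) ≤ (√(2*π))⁻¹ * rexp (ε + -(t - μ) ^ 2 / 2) := by
    apply mul_le_mul_of_nonneg_left _ hc
    apply Real.exp_le_exp.2
    have h3 : (-(ε/μ)+μ/2)*μ = μ*μ/2 - ε := by field_simp; ring
    have h2 : μ * μ / 2 - ε ≤ t * μ := by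
      have := mul_le_mul_of_nonneg_right h (le_of_lt hμ)
      linarith
    nlinarith
  calc (√(2*π))⁻¹ * rexp (-t ^ 2 / 2) ≤ (√(2*π))⁻¹ * rexp (ε + -(t - μ) ^ 2 / 2) := this
    _ = rexp ε * ((√(2*π))⁻¹ * rexp (-(t-μ)^2/2)) := by rw [Real.exp_add]; ring

lemma pdf_ratio_le {μ ε : ℝ} (hμ : 0 < μ) {t : ℝ} (h : t ≤ -(ε/μ) + μ/2) :
    Real.exp ε * gaussianPDFReal μ 1 t ≤ gaussianPDFReal 0 1 t := by
  simp only [gaussianPDFReal, NNReal.coe_one, mul_one, sub_zero]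
  have hc : (0:ℝ) ≤ (√(2 * π))⁻¹ := by positivity
  calc rexp ε * ((√(2*π))⁻¹ * rexp (-(t-μ)^2/2)) = (√(2*π))⁻¹ * rexp (ε + -(t - μ) ^ 2 / 2) := by
        rw [Real.exp_add]; ring
    _ ≤ (√(2*π))⁻¹ * rexp (-t ^ 2 / 2) := by
        apply mul_le_mul_of_nonneg_left _ hc
        apply Real.exp_le_exp.2
        have h3 : (-(ε/μ)+μ/2)*μ = μ*μ/2 - ε := by field_simp; ring
        have h2 : t * μ ≤ μ * μ / 2 - ε := by
          have := mul_le_mul_of_nonneg_right h (le_of_lt hμ)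
          linarith
        nlinarith

lemma phi_opt {μ ε : ℝ} (hμ : 0 < μ) (u : ℝ) :
    stdGaussianCDF u - Real.exp ε * stdGaussianCDF (u - μ) ≤
      stdGaussianCDF (-(ε/μ) + μ/2) - Real.exp ε * stdGaussianCDF (-(ε/μ) - μ/2) := by
  set u₀ : ℝ := -(ε/μ) + μ/2 with hu₀
  have hsub : u₀ - μ = -(ε/μ) - μ/2 := by rw [hu₀]; ring
  rw [← hsub]
  rcases le_total u u₀ with hc | hc
  · -- u ≤ u₀ : exp ε * (Φ(u₀-μ) - Φ(u-μ)) ≤ Φ u₀ - Φ u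
    have hM : stdGaussianCDF u₀ - stdGaussianCDF u = ((gaussianReal 0 1) (Set.Ioc u u₀)).toReal :=
      Phi_diff hc
    have hN : stdGaussianCDF (u₀ - μ) - stdGaussianCDF (u - μ)
        = ((gaussianReal μ 1) (Set.Ioc u u₀)).toReal := by
      rw [gauss_shift, Phi_diff (by linarith)]
    have key : ENNReal.ofReal (Real.exp ε) * (gaussianReal μ 1) (Set.Ioc u u₀)
        ≤ (gaussianReal 0 1) (Set.Ioc u u₀) := by
      rw [gauss_Ioc, gauss_Ioc, ← lintegral_const_mul _
        ((measurable_gaussianPDFReal μ 1).ennreal_ofReal)]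
      refine setLIntegral_mono (measurable_gaussianPDFReal 0 1).ennreal_ofReal fun t ht => ?_
      rw [← ENNReal.ofReal_mul (Real.exp_nonneg ε)]
      exact ENNReal.ofReal_le_ofReal (pdf_ratio_le hμ ht.2)
    have key' := ENNReal.toReal_mono (measure_ne_top _ _) key
    rw [ENNReal.toReal_mul, ENNReal.toReal_ofReal (Real.exp_nonneg ε)] at key'
    rw [← hN] at key'
    rw [← hM] at key'
    linarith
  · have hM : stdGaussianCDF u - stdGaussianCDF u₀ = ((gaussianReal 0 1) (Set.Ioc u₀ u)).toReal :=
      Phi_diff hc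
    have hN : stdGaussianCDF (u - μ) - stdGaussianCDF (u₀ - μ)
        = ((gaussianReal μ 1) (Set.Ioc u₀ u)).toReal := by
      rw [gauss_shift, Phi_diff (by linarith)]
    have key : (gaussianReal 0 1) (Set.Ioc u₀ u)
        ≤ ENNReal.ofReal (Real.exp ε) * (gaussianReal μ 1) (Set.Ioc u₀ u) := by
      rw [gauss_Ioc, gauss_Ioc, ← lintegral_const_mul _
        ((measurable_gaussianPDFReal μ 1).ennreal_ofReal)]
      refine setLIntegral_mono ((measurable_gaussianPDFReal μ 1).ennreal_ofReal.const_mul _)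
        fun t ht => ?_
      rw [← ENNReal.ofReal_mul (Real.exp_nonneg ε)]
      exact ENNReal.ofReal_le_ofReal (pdf_ratio_ge hμ ht.1.le)
    have key' := ENNReal.toReal_mono (by finiteness) key
    rw [ENNReal.toReal_mul, ENNReal.toReal_ofReal (Real.exp_nonneg ε)] at key'
    rw [← hN] at key'
    rw [← hM] at key'
    linarith

lemma Phi_continuous : Continuous stdGaussianCDF := by
  have hlip : ∀ a b : ℝ, a ≤ b → stdGaussianCDF b - stdGaussianCDF a ≤ (√(2*π))⁻¹ * (b - a) := by
    intro a b hab
    rw [Phi_diff hab, gauss_Ioc]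
    have hb : ∫⁻ t in Set.Ioc a b, ENNReal.ofReal (gaussianPDFReal 0 1 t)
        ≤ ∫⁻ _ in Set.Ioc a b, ENNReal.ofReal ((√(2*π))⁻¹) := by
      refine setLIntegral_mono measurable_const fun t _ => ENNReal.ofReal_le_ofReal ?_
      simp only [gaussianPDFReal, NNReal.coe_one, mul_one, sub_zero]
      calc (√(2*π))⁻¹ * rexp (-t^2/2) ≤ (√(2*π))⁻¹ * 1 := by
            apply mul_le_mul_of_nonneg_left _ (by positivity)
            rw [← Real.exp_zero]
            apply Real.exp_le_exp.2; nlinarith [sq_nonneg t]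
        _ = (√(2*π))⁻¹ := mul_one _
    rw [lintegral_const, Measure.restrict_apply_univ, Real.volume_Ioc] at hb
    refine ENNReal.toReal_le_of_le_ofReal (mul_nonneg (by positivity) (by linarith)) (hb.trans ?_)
    rw [← ENNReal.ofReal_mul (by positivity)]
  have : LipschitzWith ⟨(√(2*π))⁻¹, by positivity⟩ stdGaussianCDF := by
    apply LipschitzWith.of_dist_le_mul
    intro x y
    rcases le_total x y with h | h
    · rw [Real.dist_eq, Real.dist_eq, abs_of_nonpos (by have := Phi_mono h; linarith),
        abs_of_nonpos (by linarith)]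
      have := hlip x y h
      change _ ≤ (√(2*π))⁻¹ * _
      linarith
    · rw [Real.dist_eq, Real.dist_eq, abs_of_nonneg (by have := Phi_mono h; linarith),
        abs_of_nonneg (by linarith)]
      have := hlip y x h
      change _ ≤ (√(2*π))⁻¹ * _
      linarith
  exact this.continuous

lemma Phi_tendsto_atTop : Tendsto stdGaussianCDF atTop (nhds 1) := by
  have h := tendsto_measure_Iic_atTop (gaussianReal 0 1)
  have h2 := (ENNReal.tendsto_toReal (a := (gaussianReal 0 1) Set.univ) (by finiteness)).comp h
  exact (by simpa [Function.comp_def] using h2 :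
    Tendsto (fun x => ((gaussianReal 0 1) (Set.Iic x)).toReal) atTop (nhds 1))

lemma Phi_tendsto_atBot : Tendsto stdGaussianCDF atBot (nhds 0) := by
  have hIci := tendsto_measure_Ici_atBot (gaussianReal 0 1)
  have h2 := (ENNReal.tendsto_toReal (a := (gaussianReal 0 1) Set.univ) (by finiteness)).comp hIci
  simp only [measure_univ, ENNReal.toReal_one, Function.comp] at h2
  have hb : ∀ x : ℝ, stdGaussianCDF x ≤ 1 - ((gaussianReal 0 1) (Set.Ici (x+1))).toReal := by
    intro x
    have hd : (gaussianReal 0 1) (Set.Iic x) + (gaussianReal 0 1) (Set.Ici (x+1))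
        ≤ (gaussianReal 0 1) Set.univ := by
      rw [← measure_union (by
        apply Set.disjoint_left.2; intro a ha ha'
        simp only [Set.mem_Iic] at ha; simp only [Set.mem_Ici] at ha'; linarith) measurableSet_Ici]
      exact measure_mono (Set.subset_univ _)
    rw [measure_univ] at hd
    have := ENNReal.toReal_mono (by norm_num) hd
    rw [ENNReal.toReal_add (measure_ne_top _ _) (measure_ne_top _ _), ENNReal.toReal_one] at this
    simp only [stdGaussianCDF]
    linarith
  have htend : Tendsto (fun x : ℝ => 1 - ((gaussianReal 0 1) (Set.Ici (x+1))).toReal)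
      atBot (nhds 0) := by
    have : Tendsto (fun x : ℝ => x + 1) atBot atBot := tendsto_atBot_add_const_right _ _ tendsto_id
    have h3 := h2.comp this
    have h4 := (tendsto_const_nhds (x := (1:ℝ)) (f := atBot)).sub h3
    simpa using h4
  exact squeeze_zero (fun x => Phi_nonneg x) hb htend


lemma Phi_surj {y : ℝ} (h0 : 0 < y) (h1 : y < 1) : ∃ u, stdGaussianCDF u = y := by
  obtain ⟨a, ha⟩ := (Phi_tendsto_atBot.eventually_lt_const h0).exists
  obtain ⟨b, hb⟩ := (Phi_tendsto_atTop.eventually_const_lt h1).exists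
  have hab : a ≤ b := by
    by_contra hn
    exact absurd (Phi_mono (le_of_not_ge hn)) (by linarith)
  have := intermediate_value_Icc hab Phi_continuous.continuousOn
  obtain ⟨u, _, hu⟩ := this ⟨ha.le, hb.le⟩
  exact ⟨u, hu⟩

lemma Phi_invFun {y : ℝ} (h0 : 0 < y) (h1 : y < 1) :
    stdGaussianCDF (stdGaussianCDFInv y) = y :=
  Function.invFun_eq (Phi_surj h0 h1)


lemma Gmu_nonneg (μ x : ℝ) : 0 ≤ Gmu μ x := by
  unfold Gmu; split_ifs
  · norm_num
  · norm_num
  · exact Phi_nonneg _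

lemma Gmu_le_one (μ x : ℝ) : Gmu μ x ≤ 1 := by
  unfold Gmu; split_ifs
  · norm_num
  · norm_num
  · exact Phi_le_one _

lemma gmu_key {μ ε : ℝ} (hμ : 0 < μ) (hε : 0 ≤ ε)
    (hδ : 0 ≤ stdGaussianCDF (-(ε/μ) + μ/2) - Real.exp ε * stdGaussianCDF (-(ε/μ) - μ/2))
    {b : ℝ} (hb0 : 0 ≤ b) (hb1 : b ≤ 1) :
    b ≤ Real.exp ε * Gmu μ (1 - b)
      + (stdGaussianCDF (-(ε/μ) + μ/2) - Real.exp ε * stdGaussianCDF (-(ε/μ) - μ/2)) := by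
  have hexp : (1:ℝ) ≤ Real.exp ε := by
    rw [← Real.exp_zero]; exact Real.exp_le_exp.2 hε
  rcases le_or_gt b 0 with hb | hb
  · have hb' : b = 0 := le_antisymm hb hb0
    have := mul_nonneg (Real.exp_nonneg ε) (Gmu_nonneg μ (1 - b))
    linarith
  rcases le_or_gt 1 b with hb' | hb'
  · have hbe : (1:ℝ) - b ≤ 0 := by linarith
    have : Gmu μ (1 - b) = 1 := by unfold Gmu; rw [if_pos hbe]
    rw [this]
    linarith
  · have h1 : ¬ (1 - b ≤ 0) := by linarith
    have h2 : ¬ (1 ≤ 1 - b) := by linarith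
    have hG : Gmu μ (1 - b) = stdGaussianCDF (stdGaussianCDFInv b - μ) := by
      unfold Gmu; rw [if_neg h1, if_neg h2]; norm_num
    have hinv : stdGaussianCDF (stdGaussianCDFInv b) = b := Phi_invFun hb hb'
    have := phi_opt (ε := ε) hμ (stdGaussianCDFInv b)
    rw [hinv] at this
    rw [hG]
    linarith


section Omega
variable {ξ : ℕ+ → ℝ} (hξ0 : ∀ k, 0 ≤ ξ k)
  (hmean : Summable fun k : ℕ+ => (k : ℝ) * ξ k)

include hξ0 hmean

lemma omega_summable {x : ℝ} (hx0 : 0 ≤ x) (hx1 : x ≤ 1) :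
    Summable fun k : ℕ+ => (k : ℝ) * ξ k * x ^ ((k : ℕ) - 1) := by
  refine Summable.of_nonneg_of_le (fun k => ?_) (fun k => ?_) hmean
  · have : (0:ℝ) ≤ (k:ℝ) := by positivity
    exact mul_nonneg (mul_nonneg this (hξ0 k)) (pow_nonneg hx0 _)
  · exact mul_le_of_le_one_right (mul_nonneg (by positivity) (hξ0 k)) (pow_le_one₀ hx0 hx1)

lemma omega_mono {x y : ℝ} (hx0 : 0 ≤ x) (hxy : x ≤ y) (hy1 : y ≤ 1) :
    omegaXi ξ x ≤ omegaXi ξ y := by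
  refine Summable.tsum_le_tsum (fun k => ?_) (omega_summable hξ0 hmean hx0 (hxy.trans hy1))
    (omega_summable hξ0 hmean (hx0.trans hxy) hy1)
  exact mul_le_mul_of_nonneg_left (pow_le_pow_left₀ hx0 hxy _)
    (mul_nonneg (by positivity) (hξ0 k))

lemma omega_lb {x : ℝ} (hx0 : 0 ≤ x) (hx1 : x ≤ 1) : ξ 1 ≤ omegaXi ξ x := by
  have h := Summable.le_tsum (omega_summable hξ0 hmean hx0 hx1) 1 (fun k _ => by
    have : (0:ℝ) ≤ (k:ℝ) := by positivity
    exact mul_nonneg (mul_nonneg this (hξ0 k)) (pow_nonneg hx0 _))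
  simpa [omegaXi] using h

omit hmean in
lemma omega_nonneg {x : ℝ} (hx0 : 0 ≤ x) : 0 ≤ omegaXi ξ x := by
  refine tsum_nonneg fun k => ?_
  have : (0:ℝ) ≤ (k:ℝ) := by positivity
  exact mul_nonneg (mul_nonneg this (hξ0 k)) (pow_nonneg hx0 _)

end Omega


lemma tradeoff_set {Ω : Type*} [MeasurableSpace Ω] {P P' : Measure Ω}
    [IsProbabilityMeasure P] [IsProbabilityMeasure P'] {f : ℝ → ℝ}
    (h : SatisfiesTradeoff P P' f) {B : Set Ω} (hB : MeasurableSet B) :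
    f (1 - (P B).toReal) ≤ (P' B).toReal := by
  have hφm : Measurable (Bᶜ.indicator (1 : Ω → ℝ)) := measurable_const.indicator hB.compl
  have hφv : ∀ ω, Bᶜ.indicator (1 : Ω → ℝ) ω ∈ Set.Icc (0:ℝ) 1 := fun ω => by
    by_cases hω : ω ∈ Bᶜ <;> simp [hω, Set.indicator_of_mem, Set.indicator_of_notMem]
  have key := h _ hφm hφv
  have h1 : ∫ ω, Bᶜ.indicator (1 : Ω → ℝ) ω ∂P = (P Bᶜ).toReal := by
    simpa [measureReal_def] using integral_indicator_one (X := Ω) (μ := P) hB.compl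
  have hcompl : (P Bᶜ).toReal = 1 - (P B).toReal := by
    rw [prob_compl_eq_one_sub hB, ENNReal.toReal_sub_of_le prob_le_one (by norm_num)]
    norm_num
  have h2 : ∫ ω, (1 - Bᶜ.indicator (1 : Ω → ℝ) ω) ∂P' = (P' B).toReal := by
    have hint : Integrable (Bᶜ.indicator (1 : Ω → ℝ)) P' :=
      (integrable_const (1:ℝ)).indicator hB.compl
    rw [integral_sub (integrable_const 1) hint, integral_const]
    simp only [measure_univ, ENNReal.toReal_one, smul_eq_mul, one_mul]
    have h3 : ∫ ω, Bᶜ.indicator (1 : Ω → ℝ) ω ∂P' = (P' Bᶜ).toReal := by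
      simpa [measureReal_def] using integral_indicator_one (X := Ω) (μ := P') hB.compl
    rw [h3, prob_compl_eq_one_sub hB, ENNReal.toReal_sub_of_le prob_le_one (by norm_num)]
    norm_num
  rw [h1, hcompl, h2] at key
  exact key


lemma prob_toReal_le_one {Ω : Type*} [MeasurableSpace Ω] (P : Measure Ω)
    [IsProbabilityMeasure P] (s : Set Ω) : (P s).toReal ≤ 1 := by
  simpa using ENNReal.toReal_mono (by norm_num) (prob_le_one (μ := P) (s := s))

lemma oneSided (μ : ℝ) (hμ : 0 < μ)
    (p p' : ℝ → ℝ) (hp0 : ∀ x, 0 ≤ p x) (hp'0 : ∀ x, 0 ≤ p' x)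
    (hpm : Measurable p) (hp'm : Measurable p')
    (P P' : Measure ℝ) [IsProbabilityMeasure P] [IsProbabilityMeasure P']
    (hP : P = volume.withDensity fun x => ENNReal.ofReal (p x))
    (hP' : P' = volume.withDensity fun x => ENNReal.ofReal (p' x))
    (F F' : ℝ → ℝ) (hF : ∀ x, F x = (P (Set.Iic x)).toReal)
    (hF' : ∀ x, F' x = (P' (Set.Iic x)).toReal)
    (htrade : SatisfiesTradeoff P P' (Gmu μ))
    (ξ : ℕ+ → ℝ) (hξ0 : ∀ k, 0 ≤ ξ k) (hξone : 0 < ξ 1)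
    (hmean : Summable fun k : ℕ+ => (k : ℝ) * ξ k)
    (Q Q' : Measure ℝ)
    (hQ : Q = volume.withDensity fun x => ENNReal.ofReal (p x * omegaXi ξ (F x)))
    (hQ' : Q' = volume.withDensity fun x => ENNReal.ofReal (p' x * omegaXi ξ (F' x)))
    (δH : ℝ) (hδH : 0 < δH) (ε : ℝ) (hε : 0 ≤ ε)
    (hεδ : δH / omegaXi ξ 1 =
      stdGaussianCDF (-(ε / μ) + μ / 2) - Real.exp ε * stdGaussianCDF (-(ε / μ) - μ / 2))
    (εH : ℝ)
    (hεH : εH = ε + sSup ((fun a => Real.log (omegaXi ξ (1 - a) / omegaXi ξ (Gmu μ a))) ''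
        Set.Icc (0 : ℝ) 1)) :
    Indist εH δH Q Q' := by
  intro S hS
  set ω1 := omegaXi ξ 1 with hω1
  have hω1pos : 0 < ω1 := lt_of_lt_of_le hξone (omega_lb hξ0 hmean zero_le_one le_rfl)
  set δε := δH / ω1 with hδε
  have hδεpos : 0 < δε := div_pos hδH hω1pos
  have hδε0 : 0 ≤ stdGaussianCDF (-(ε / μ) + μ / 2)
      - Real.exp ε * stdGaussianCDF (-(ε / μ) - μ / 2) := by rw [← hεδ]; exact hδεpos.le
  -- F, F' ranges
  have hF0 : ∀ x, 0 ≤ F x := fun x => by rw [hF]; exact ENNReal.toReal_nonneg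
  have hF1 : ∀ x, F x ≤ 1 := fun x => by rw [hF]; exact prob_toReal_le_one P _
  have hF'0 : ∀ x, 0 ≤ F' x := fun x => by rw [hF']; exact ENNReal.toReal_nonneg
  have hF'1 : ∀ x, F' x ≤ 1 := fun x => by rw [hF']; exact prob_toReal_le_one P' _
  have hF'mono : Monotone F' := fun a b hab => by
    rw [hF', hF']
    exact ENNReal.toReal_mono (measure_ne_top _ _) (measure_mono (Set.Iic_subset_Iic.2 hab))
  have hg'mono : Monotone fun x => omegaXi ξ (F' x) := fun a b hab =>
    omega_mono hξ0 hmean (hF'0 a) (hF'mono hab) (hF'1 b)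
  have hg'meas : Measurable fun x => omegaXi ξ (F' x) := hg'mono.measurable
  -- sup bound
  set T := (fun a => Real.log (omegaXi ξ (1 - a) / omegaXi ξ (Gmu μ a))) '' Set.Icc (0 : ℝ) 1
    with hT
  have hTbdd : BddAbove T := by
    refine ⟨Real.log (ω1 / ξ 1), ?_⟩
    rintro _ ⟨a, ha, rfl⟩
    have h1 : omegaXi ξ (1 - a) ≤ ω1 :=
      omega_mono hξ0 hmean (by linarith [ha.2]) (by linarith [ha.1]) le_rfl
    have h2 : ξ 1 ≤ omegaXi ξ (Gmu μ a) := omega_lb hξ0 hmean (Gmu_nonneg μ a) (Gmu_le_one μ a)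
    have h3 : ξ 1 ≤ omegaXi ξ (1 - a) :=
      omega_lb hξ0 hmean (by linarith [ha.2]) (by linarith [ha.1])
    have hpos : 0 < omegaXi ξ (1 - a) / omegaXi ξ (Gmu μ a) :=
      div_pos (lt_of_lt_of_le hξone h3) (lt_of_lt_of_le hξone h2)
    have hpos' : 0 < ω1 / ξ 1 := div_pos hω1pos hξone
    refine (Real.log_le_log_iff hpos hpos').2 ?_
    exact div_le_div₀ hω1pos.le h1 hξone h2
  set s := sSup T with hsdef
  have hεHs : εH = ε + s := hεH
  -- pointwise omega comparison
  have hs : ∀ x, omegaXi ξ (F x) ≤ Real.exp s * omegaXi ξ (F' x) := by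
    intro x
    have hGle : Gmu μ (1 - F x) ≤ F' x := by
      have h0 := tradeoff_set htrade (measurableSet_Iic (a := x))
      rw [← hF x, ← hF' x] at h0
      exact h0
    have hmem : Real.log (omegaXi ξ (1 - (1 - F x)) / omegaXi ξ (Gmu μ (1 - F x))) ∈ T :=
      ⟨1 - F x, ⟨by linarith [hF1 x], by linarith [hF0 x]⟩, rfl⟩
    have hle := le_csSup hTbdd hmem
    have h1mb : 1 - (1 - F x) = F x := by ring
    rw [h1mb] at hle
    have hωG : ξ 1 ≤ omegaXi ξ (Gmu μ (1 - F x)) :=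
      omega_lb hξ0 hmean (Gmu_nonneg _ _) (Gmu_le_one _ _)
    have hωF : ξ 1 ≤ omegaXi ξ (F x) := omega_lb hξ0 hmean (hF0 x) (hF1 x)
    have hωGpos : 0 < omegaXi ξ (Gmu μ (1 - F x)) := lt_of_lt_of_le hξone hωG
    have hratio : omegaXi ξ (F x) / omegaXi ξ (Gmu μ (1 - F x)) ≤ Real.exp s :=
      (Real.log_le_iff_le_exp (div_pos (lt_of_lt_of_le hξone hωF) hωGpos)).1 hle
    have h4 : omegaXi ξ (F x) ≤ Real.exp s * omegaXi ξ (Gmu μ (1 - F x)) :=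
      (div_le_iff₀ hωGpos).1 hratio
    have h5 : omegaXi ξ (Gmu μ (1 - F x)) ≤ omegaXi ξ (F' x) :=
      omega_mono hξ0 hmean (Gmu_nonneg _ _) hGle (hF'1 x)
    calc omegaXi ξ (F x) ≤ Real.exp s * omegaXi ξ (Gmu μ (1 - F x)) := h4
      _ ≤ Real.exp s * omegaXi ξ (F' x) :=
        mul_le_mul_of_nonneg_left h5 (Real.exp_nonneg s)
  -- pointwise density bound
  have hpt : ∀ x, p x * omegaXi ξ (F x) ≤ max (p x - Real.exp ε * p' x) 0 * ω1
      + Real.exp εH * (p' x * omegaXi ξ (F' x)) := by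
    intro x
    have hw := hs x
    have hw0 : 0 ≤ omegaXi ξ (F x) := omega_nonneg hξ0 (hF0 x)
    have hw1 : omegaXi ξ (F x) ≤ ω1 := omega_mono hξ0 hmean (hF0 x) (hF1 x) le_rfl
    have hw'0 : 0 ≤ omegaXi ξ (F' x) := omega_nonneg hξ0 (hF'0 x)
    have hεHsplit : Real.exp εH = Real.exp ε * Real.exp s := by
      rw [hεHs, Real.exp_add]
    rcases le_or_gt (p x) (Real.exp ε * p' x) with hc | hc
    · have hmax : max (p x - Real.exp ε * p' x) 0 = 0 := max_eq_right (by linarith)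
      rw [hmax, zero_mul, zero_add, hεHsplit]
      have hA : p x * omegaXi ξ (F x) ≤ (Real.exp ε * p' x) * (Real.exp s * omegaXi ξ (F' x)) :=
        mul_le_mul hc hw hw0 (mul_nonneg (Real.exp_nonneg ε) (hp'0 x))
      calc p x * omegaXi ξ (F x) ≤ (Real.exp ε * p' x) * (Real.exp s * omegaXi ξ (F' x)) := hA
        _ = Real.exp ε * Real.exp s * (p' x * omegaXi ξ (F' x)) := by ring
    · have hmax : max (p x - Real.exp ε * p' x) 0 = p x - Real.exp ε * p' x :=
        max_eq_left (by linarith)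
      rw [hmax, hεHsplit]
      have e1 : p x * omegaXi ξ (F x) = (p x - Real.exp ε * p' x) * omegaXi ξ (F x)
          + Real.exp ε * (p' x * omegaXi ξ (F x)) := by ring
      have h6 : (p x - Real.exp ε * p' x) * omegaXi ξ (F x)
          ≤ (p x - Real.exp ε * p' x) * ω1 := mul_le_mul_of_nonneg_left hw1 (by linarith)
      have h7 : p' x * omegaXi ξ (F x) ≤ p' x * (Real.exp s * omegaXi ξ (F' x)) :=
        mul_le_mul_of_nonneg_left hw (hp'0 x)
      have h8 : Real.exp ε * (p' x * omegaXi ξ (F x))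
          ≤ Real.exp ε * (p' x * (Real.exp s * omegaXi ξ (F' x))) :=
        mul_le_mul_of_nonneg_left h7 (Real.exp_nonneg ε)
      have e2 : Real.exp ε * (p' x * (Real.exp s * omegaXi ξ (F' x)))
          = Real.exp ε * Real.exp s * (p' x * omegaXi ξ (F' x)) := by ring
      linarith
  -- measurability
  have hmax_meas : Measurable fun x => max (p x - Real.exp ε * p' x) 0 :=
    (hpm.sub (hp'm.const_mul _)).max measurable_const
  have hQS : Q S = ∫⁻ x in S, ENNReal.ofReal (p x * omegaXi ξ (F x)) := by
    rw [hQ, withDensity_apply _ hS]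
  have hQ'S : Q' S = ∫⁻ x in S, ENNReal.ofReal (p' x * omegaXi ξ (F' x)) := by
    rw [hQ', withDensity_apply _ hS]
  have step1 : Q S ≤ ∫⁻ x in S, (ENNReal.ofReal (max (p x - Real.exp ε * p' x) 0 * ω1)
      + ENNReal.ofReal (Real.exp εH * (p' x * omegaXi ξ (F' x)))) := by
    rw [hQS]
    refine lintegral_mono fun x => ?_
    calc ENNReal.ofReal (p x * omegaXi ξ (F x))
        ≤ ENNReal.ofReal (max (p x - Real.exp ε * p' x) 0 * ω1
            + Real.exp εH * (p' x * omegaXi ξ (F' x))) := ENNReal.ofReal_le_ofReal (hpt x)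
      _ ≤ _ := ENNReal.ofReal_add_le
  rw [lintegral_add_left ((hmax_meas.mul_const _).ennreal_ofReal)] at step1
  -- piece 1
  have piece1 : ∫⁻ x in S, ENNReal.ofReal (max (p x - Real.exp ε * p' x) 0 * ω1)
      = ENNReal.ofReal ω1 * ∫⁻ x in S, ENNReal.ofReal (max (p x - Real.exp ε * p' x) 0) := by
    rw [← lintegral_const_mul _ hmax_meas.ennreal_ofReal]
    refine lintegral_congr fun x => ?_
    rw [← ENNReal.ofReal_mul hω1pos.le, mul_comm]
  -- piece 2
  have piece2 : ∫⁻ x in S, ENNReal.ofReal (Real.exp εH * (p' x * omegaXi ξ (F' x)))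
      = ENNReal.ofReal (Real.exp εH) * Q' S := by
    rw [hQ'S, ← lintegral_const_mul _
      (f := fun x => ENNReal.ofReal (p' x * omegaXi ξ (F' x))) ((hp'm.mul hg'meas).ennreal_ofReal)]
    refine lintegral_congr fun x => ?_
    rw [← ENNReal.ofReal_mul (Real.exp_nonneg εH)]
  -- claim A
  have claimA : ∫⁻ x in S, ENNReal.ofReal (max (p x - Real.exp ε * p' x) 0)
      ≤ ENNReal.ofReal δε := by
    set C := {x : ℝ | Real.exp ε * p' x < p x} with hCdef
    have hC : MeasurableSet C := measurableSet_lt (hp'm.const_mul _) hpm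
    have hB : MeasurableSet (S ∩ C) := hS.inter hC
    have hsplit := lintegral_inter_add_diff (μ := volume)
      (fun x => ENNReal.ofReal (max (p x - Real.exp ε * p' x) 0)) S hC
    have hz : ∫⁻ x in S \ C, ENNReal.ofReal (max (p x - Real.exp ε * p' x) 0) = 0 := by
      have : ∫⁻ x in S \ C, ENNReal.ofReal (max (p x - Real.exp ε * p' x) 0)
          = ∫⁻ _ in S \ C, 0 := by
        refine setLIntegral_congr_fun (hS.diff hC) (fun x hx => ?_)
        have hxc : ¬ (Real.exp ε * p' x < p x) := hx.2
        rw [max_eq_right (by linarith [not_lt.1 hxc])]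
        simp
      rw [this, lintegral_zero]
    have heq : ∫⁻ x in S, ENNReal.ofReal (max (p x - Real.exp ε * p' x) 0)
        = ∫⁻ x in S ∩ C, ENNReal.ofReal (max (p x - Real.exp ε * p' x) 0) := by
      rw [← hsplit, hz, add_zero]
    rw [heq]
    have hkey : (∫⁻ x in S ∩ C, ENNReal.ofReal (max (p x - Real.exp ε * p' x) 0))
        + ∫⁻ x in S ∩ C, ENNReal.ofReal (Real.exp ε * p' x) = ∫⁻ x in S ∩ C,
          ENNReal.ofReal (p x) := by
      rw [← lintegral_add_left hmax_meas.ennreal_ofReal]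
      refine setLIntegral_congr_fun hB (fun x hx => ?_)
      have hxc : Real.exp ε * p' x < p x := hx.2
      rw [max_eq_left (by linarith), ← ENNReal.ofReal_add (by linarith)
        (mul_nonneg (Real.exp_nonneg ε) (hp'0 x))]
      ring_nf
    have hPB : ∫⁻ x in S ∩ C, ENNReal.ofReal (p x) = P (S ∩ C) := by
      rw [hP, withDensity_apply _ hB]
    have hP'B : ∫⁻ x in S ∩ C, ENNReal.ofReal (Real.exp ε * p' x)
        = ENNReal.ofReal (Real.exp ε) * P' (S ∩ C) := by
      rw [hP', withDensity_apply _ hB, ← lintegral_const_mul _ hp'm.ennreal_ofReal]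
      refine lintegral_congr fun x => ?_
      rw [← ENNReal.ofReal_mul (Real.exp_nonneg ε)]
    have hPbound : P (S ∩ C) ≤ ENNReal.ofReal (Real.exp ε) * P' (S ∩ C)
        + ENNReal.ofReal δε := by
      have hb0 : 0 ≤ (P (S ∩ C)).toReal := ENNReal.toReal_nonneg
      have hb1 : (P (S ∩ C)).toReal ≤ 1 := prob_toReal_le_one P _
      have hG := tradeoff_set htrade hB
      have hkey2 := gmu_key hμ hε hδε0 hb0 hb1
      rw [← hεδ] at hkey2
      have h5 : Real.exp ε * Gmu μ (1 - (P (S ∩ C)).toReal)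
          ≤ Real.exp ε * (P' (S ∩ C)).toReal :=
        mul_le_mul_of_nonneg_left hG (Real.exp_nonneg ε)
      have hreal : (P (S ∩ C)).toReal ≤ Real.exp ε * (P' (S ∩ C)).toReal + δε := by
        linarith
      calc P (S ∩ C) = ENNReal.ofReal (P (S ∩ C)).toReal :=
            (ENNReal.ofReal_toReal (measure_ne_top _ _)).symm
        _ ≤ ENNReal.ofReal (Real.exp ε * (P' (S ∩ C)).toReal + δε) :=
            ENNReal.ofReal_le_ofReal hreal
        _ ≤ ENNReal.ofReal (Real.exp ε * (P' (S ∩ C)).toReal) + ENNReal.ofReal δε :=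
            ENNReal.ofReal_add_le
        _ = ENNReal.ofReal (Real.exp ε) * ENNReal.ofReal ((P' (S ∩ C)).toReal)
            + ENNReal.ofReal δε := by rw [ENNReal.ofReal_mul (Real.exp_nonneg ε)]
        _ = ENNReal.ofReal (Real.exp ε) * P' (S ∩ C) + ENNReal.ofReal δε := by
            rw [ENNReal.ofReal_toReal (measure_ne_top _ _)]
    have hfin : ENNReal.ofReal (Real.exp ε) * P' (S ∩ C) ≠ ⊤ := by finiteness
    rw [← ENNReal.add_le_add_iff_right hfin]
    calc (∫⁻ x in S ∩ C, ENNReal.ofReal (max (p x - Real.exp ε * p' x) 0))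
        + ENNReal.ofReal (Real.exp ε) * P' (S ∩ C) = P (S ∩ C) := by rw [← hP'B, hkey, hPB]
      _ ≤ ENNReal.ofReal (Real.exp ε) * P' (S ∩ C) + ENNReal.ofReal δε := hPbound
      _ = ENNReal.ofReal δε + ENNReal.ofReal (Real.exp ε) * P' (S ∩ C) := add_comm _ _
  -- combine
  have hδεδH : ENNReal.ofReal ω1 * ENNReal.ofReal δε = ENNReal.ofReal δH := by
    rw [← ENNReal.ofReal_mul hω1pos.le]
    congr 1
    rw [hδε]
    field_simp
  calc Q S ≤ (∫⁻ x in S, ENNReal.ofReal (max (p x - Real.exp ε * p' x) 0 * ω1))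
        + ∫⁻ x in S, ENNReal.ofReal (Real.exp εH * (p' x * omegaXi ξ (F' x))) := step1
    _ = ENNReal.ofReal ω1 * (∫⁻ x in S, ENNReal.ofReal (max (p x - Real.exp ε * p' x) 0))
        + ENNReal.ofReal (Real.exp εH) * Q' S := by rw [piece1, piece2]
    _ ≤ ENNReal.ofReal ω1 * ENNReal.ofReal δε + ENNReal.ofReal (Real.exp εH) * Q' S := by
        gcongr
    _ = ENNReal.ofReal (Real.exp εH) * Q' S + ENNReal.ofReal δH := by
        rw [hδεδH, add_comm]

/-- let `μ > 0` and let `P`, `P'` be probability measures on `ℝ` with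
Lebesgue densities `p`, `p'` and CDFs `F`, `F'`, such that both `(P,P')` and `(P',P)`
satisfy the trade-off bound `G_μ`. Let `ξ` be a pmf on the positive integers with
`ξ(1) > 0` and finite mean, and let `Q`, `Q'` have Lebesgue densities `p·ω_ξ(F)`,
`p'·ω_ξ(F')`. Fix `δ_H > 0` and let `ε ≥ 0` satisfy
`δ_H/ω_ξ(1) = Φ(−ε/μ + μ/2) − e^ε·Φ(−ε/μ − μ/2)`. Set
`ε_H = ε + sup_{a∈[0,1]} log(ω_ξ(1−a)/ω_ξ(G_μ(a)))`. Then `Q` and `Q'` are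
`(ε_H, δ_H)`-indistinguishable in both orders. -/
theorem stmt_9 (μ : ℝ) (hμ : 0 < μ)
    (p p' : ℝ → ℝ) (hp0 : ∀ x, 0 ≤ p x) (hp'0 : ∀ x, 0 ≤ p' x)
    (hpm : Measurable p) (hp'm : Measurable p')
    (P P' : Measure ℝ) [IsProbabilityMeasure P] [IsProbabilityMeasure P']
    (hP : P = volume.withDensity fun x => ENNReal.ofReal (p x))
    (hP' : P' = volume.withDensity fun x => ENNReal.ofReal (p' x))
    (F F' : ℝ → ℝ) (hF : ∀ x, F x = (P (Set.Iic x)).toReal)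
    (hF' : ∀ x, F' x = (P' (Set.Iic x)).toReal)
    (htrade : SatisfiesTradeoff P P' (Gmu μ)) (htrade' : SatisfiesTradeoff P' P (Gmu μ))
    (ξ : ℕ+ → ℝ) (hξ0 : ∀ k, 0 ≤ ξ k) (hξ1 : ∑' k, ξ k = 1) (hξone : 0 < ξ 1)
    (hmean : Summable fun k : ℕ+ => (k : ℝ) * ξ k)
    (Q Q' : Measure ℝ)
    (hQ : Q = volume.withDensity fun x => ENNReal.ofReal (p x * omegaXi ξ (F x)))
    (hQ' : Q' = volume.withDensity fun x => ENNReal.ofReal (p' x * omegaXi ξ (F' x)))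
    (δH : ℝ) (hδH : 0 < δH) (ε : ℝ) (hε : 0 ≤ ε)
    (hεδ : δH / omegaXi ξ 1 =
      stdGaussianCDF (-(ε / μ) + μ / 2) - Real.exp ε * stdGaussianCDF (-(ε / μ) - μ / 2))
    (εH : ℝ)
    (hεH : εH = ε + sSup ((fun a => Real.log (omegaXi ξ (1 - a) / omegaXi ξ (Gmu μ a))) ''
        Set.Icc (0 : ℝ) 1)) :
    Indist εH δH Q Q' ∧ Indist εH δH Q' Q := by
  exact ⟨oneSided μ hμ p p' hp0 hp'0 hpm hp'm P P' hP hP' F F' hF hF' htrade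
      ξ hξ0 hξone hmean Q Q' hQ hQ' δH hδH ε hε hεδ εH hεH,
    oneSided μ hμ p' p hp'0 hp0 hp'm hpm P' P hP' hP F' F hF' hF htrade'
      ξ hξ0 hξone hmean Q' Q hQ' hQ δH hδH ε hε hεδ εH hεH⟩
end

section
/- Let ε > 0, δ ∈ [0,1], and let P and P' be probability measures on a measurable space. Then P and P' are (ε,δ)-indistinguishable in both orders (i.e. P(S) ≤ e^ε·P'(S) + δ and P'(S) ≤ e^ε·P(S) + δ for every measurable set S) if and only if for every randomized test φ, writing FP = ∫ φ dP and FN = ∫ (1−φ) dP', both FP + e^ε·FN ≥ 1 − δ and FN + e^ε·FP ≥ 1 − δ hold. -/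
open MeasureTheory

/-!
Writing `ψ = 1 - φ` and using `∫ (1 - φ) = 1 - ∫ φ` for probability measures, the two
test inequalities say `∫ ψ dP ≤ e^ε ∫ ψ dP' + δ` and `∫ φ dP' ≤ e^ε ∫ φ dP + δ`. So the
theorem reduces to: `μ` is `(ε,δ)`-indistinguishable from `ν` iff
`∫ g dμ ≤ e^ε ∫ g dν + δ` for every measurable `g` with values in `[0,1]`. Indicators give
one direction; for the other, write `∫ g = ∫₀¹ μ {g > t} dt` (layer cake) and integrate the
set inequality over `t ∈ (0,1]`, which contributes exactly `δ`.
-/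

lemma setLIntegral_Ioi_eq_Ioc {f : ℝ → ENNReal} {a b : ℝ} (hab : a ≤ b)
    (hf : ∀ t ∈ Set.Ioi b, f t = 0) :
    ∫⁻ t in Set.Ioi a, f t = ∫⁻ t in Set.Ioc a b, f t := by
  rw [← Set.Ioc_union_Ioi_eq_Ioi hab, lintegral_union measurableSet_Ioi Set.Ioc_disjoint_Ioi_same,
    setLIntegral_congr_fun measurableSet_Ioi hf, lintegral_zero, add_zero]

lemma lintegral_ofReal_eq_setLIntegral_Ioc_meas_lt {Ω : Type*} [MeasurableSpace Ω]
    (μ : Measure Ω) {g : Ω → ℝ} (hg : Measurable g) (hg01 : ∀ ω, g ω ∈ Set.Icc (0 : ℝ) 1) :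
    ∫⁻ ω, ENNReal.ofReal (g ω) ∂μ = ∫⁻ t in Set.Ioc (0 : ℝ) 1, μ {ω | t < g ω} := by
  rw [lintegral_eq_lintegral_meas_lt μ (.of_forall fun ω ↦ (hg01 ω).1) hg.aemeasurable]
  refine setLIntegral_Ioi_eq_Ioc zero_le_one fun t ht ↦ ?_
  convert measure_empty (μ := μ)
  exact Set.eq_empty_of_forall_notMem fun ω hω ↦ (hω.trans_le (hg01 ω).2).not_gt ht

lemma Indist.lintegral_le {Ω : Type*} [MeasurableSpace Ω] {ε δ : ℝ} {μ ν : Measure Ω}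
    (h : Indist ε δ μ ν) {g : Ω → ℝ} (hg : Measurable g) (hg01 : ∀ ω, g ω ∈ Set.Icc (0 : ℝ) 1) :
    ∫⁻ ω, ENNReal.ofReal (g ω) ∂μ ≤
      ENNReal.ofReal (Real.exp ε) * ∫⁻ ω, ENNReal.ofReal (g ω) ∂ν + ENNReal.ofReal δ := by
  rw [lintegral_ofReal_eq_setLIntegral_Ioc_meas_lt μ hg hg01,
    lintegral_ofReal_eq_setLIntegral_Ioc_meas_lt ν hg hg01]
  calc ∫⁻ t in Set.Ioc (0 : ℝ) 1, μ {ω | t < g ω}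
      ≤ ∫⁻ t in Set.Ioc (0 : ℝ) 1,
          (ENNReal.ofReal (Real.exp ε) * ν {ω | t < g ω} + ENNReal.ofReal δ) :=
        lintegral_mono fun t ↦ h _ (measurableSet_lt measurable_const hg)
    _ = ENNReal.ofReal (Real.exp ε) * (∫⁻ t in Set.Ioc (0 : ℝ) 1, ν {ω | t < g ω})
          + ENNReal.ofReal δ := by
        rw [lintegral_add_right' _ aemeasurable_const,
          lintegral_const_mul' _ _ ENNReal.ofReal_ne_top, setLIntegral_const, Real.volume_Ioc]
        norm_num

lemma ofReal_le_ofReal_exp_mul_add_ofReal_iff {a b ε δ : ℝ} (hb : 0 ≤ b) (hδ : 0 ≤ δ) :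
    ENNReal.ofReal a ≤ ENNReal.ofReal (Real.exp ε) * ENNReal.ofReal b + ENNReal.ofReal δ ↔
      a ≤ Real.exp ε * b + δ := by
  rw [← ENNReal.ofReal_mul (Real.exp_pos ε).le, ← ENNReal.ofReal_add (by positivity) hδ,
    ENNReal.ofReal_le_ofReal_iff (by positivity)]

lemma integrable_of_mem_Icc {Ω : Type*} [MeasurableSpace Ω] (μ : Measure Ω) [IsFiniteMeasure μ]
    {g : Ω → ℝ} (hg : Measurable g) (hg01 : ∀ ω, g ω ∈ Set.Icc (0 : ℝ) 1) : Integrable g μ :=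
  .of_bound hg.aestronglyMeasurable 1 <| .of_forall fun ω ↦ by
    rw [Real.norm_eq_abs, abs_of_nonneg (hg01 ω).1]
    exact (hg01 ω).2

lemma integral_one_sub_of_mem_Icc {Ω : Type*} [MeasurableSpace Ω] (μ : Measure Ω)
    [IsProbabilityMeasure μ] {g : Ω → ℝ} (hg : Measurable g)
    (hg01 : ∀ ω, g ω ∈ Set.Icc (0 : ℝ) 1) :
    ∫ ω, (1 - g ω) ∂μ = 1 - ∫ ω, g ω ∂μ := by
  rw [integral_sub (integrable_const 1) (integrable_of_mem_Icc μ hg hg01)]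
  simp

lemma one_sub_mem_Icc {x : ℝ} (hx : x ∈ Set.Icc (0 : ℝ) 1) : 1 - x ∈ Set.Icc (0 : ℝ) 1 :=
  ⟨by linarith [hx.2], by linarith [hx.1]⟩

lemma indist_iff_forall_integral_le {Ω : Type*} [MeasurableSpace Ω] {ε δ : ℝ} (hδ : 0 ≤ δ)
    {μ ν : Measure Ω} [IsFiniteMeasure μ] [IsFiniteMeasure ν] :
    Indist ε δ μ ν ↔ ∀ g : Ω → ℝ, Measurable g → (∀ ω, g ω ∈ Set.Icc (0 : ℝ) 1) →
      ∫ ω, g ω ∂μ ≤ Real.exp ε * ∫ ω, g ω ∂ν + δ := by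
  constructor
  · intro h g hg hg01
    have hg0 : ∀ ω, 0 ≤ g ω := fun ω ↦ (hg01 ω).1
    rw [← ofReal_le_ofReal_exp_mul_add_ofReal_iff (integral_nonneg hg0) hδ,
      ofReal_integral_eq_lintegral_ofReal (integrable_of_mem_Icc μ hg hg01) (.of_forall hg0),
      ofReal_integral_eq_lintegral_ofReal (integrable_of_mem_Icc ν hg hg01) (.of_forall hg0)]
    exact h.lintegral_le hg hg01
  · intro h S hS
    have hind := h (S.indicator 1) (measurable_one.indicator hS) fun ω ↦ by
      by_cases hω : ω ∈ S <;> simp [hω]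
    rw [integral_indicator_one hS, integral_indicator_one hS] at hind
    rw [← ofReal_measureReal, ← ofReal_measureReal]
    exact (ofReal_le_ofReal_exp_mul_add_ofReal_iff measureReal_nonneg hδ).2 hind

theorem stmt_10_general {Ω : Type*} [MeasurableSpace Ω] (ε δ : ℝ)
    (hδ : δ ∈ Set.Icc (0 : ℝ) 1)
    (P P' : Measure Ω) [IsProbabilityMeasure P] [IsProbabilityMeasure P'] :
    (Indist ε δ P P' ∧ Indist ε δ P' P) ↔
      ∀ φ : Ω → ℝ, Measurable φ → (∀ ω, φ ω ∈ Set.Icc (0 : ℝ) 1) →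
        1 - δ ≤ (∫ ω, φ ω ∂P) + Real.exp ε * ∫ ω, (1 - φ ω) ∂P' ∧
        1 - δ ≤ (∫ ω, (1 - φ ω) ∂P') + Real.exp ε * ∫ ω, φ ω ∂P := by
  rw [indist_iff_forall_integral_le hδ.1, indist_iff_forall_integral_le hδ.1]
  constructor
  · rintro ⟨h, h'⟩ φ hφ hφ01
    have hP := h (fun ω ↦ 1 - φ ω) (measurable_const.sub hφ) fun ω ↦ one_sub_mem_Icc (hφ01 ω)
    have hP' := h' φ hφ hφ01
    have hFP := integral_one_sub_of_mem_Icc P hφ hφ01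
    have hFN := integral_one_sub_of_mem_Icc P' hφ hφ01
    constructor <;> linarith
  · intro h
    refine ⟨fun g hg hg01 ↦ ?_, fun g hg hg01 ↦ ?_⟩
    · have hcompl :=
        (h (fun ω ↦ 1 - g ω) (measurable_const.sub hg) fun ω ↦ one_sub_mem_Icc (hg01 ω)).1
      simp only [sub_sub_cancel] at hcompl
      linarith [integral_one_sub_of_mem_Icc P hg hg01]
    · linarith [(h g hg hg01).2, integral_one_sub_of_mem_Icc P' hg hg01]

/-- DP as hypothesis testing: for `ε > 0`, `δ ∈ [0,1]`, and probability
measures `P`, `P'`, the pair is `(ε,δ)`-indistinguishable in both orders iff for every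
randomized test `φ`, with `FP = ∫ φ dP` and `FN = ∫ (1−φ) dP'`, both
`FP + e^ε·FN ≥ 1 − δ` and `FN + e^ε·FP ≥ 1 − δ` hold. -/
theorem stmt_10 {Ω : Type*} [MeasurableSpace Ω] (ε δ : ℝ) (hε : 0 < ε)
    (hδ : δ ∈ Set.Icc (0 : ℝ) 1)
    (P P' : Measure Ω) [IsProbabilityMeasure P] [IsProbabilityMeasure P'] :
    (Indist ε δ P P' ∧ Indist ε δ P' P) ↔
      ∀ φ : Ω → ℝ, Measurable φ → (∀ ω, φ ω ∈ Set.Icc (0 : ℝ) 1) →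
        1 - δ ≤ (∫ ω, φ ω ∂P) + Real.exp ε * ∫ ω, (1 - φ ω) ∂P' ∧
        1 - δ ≤ (∫ ω, (1 - φ ω) ∂P') + Real.exp ε * ∫ ω, φ ω ∂P :=
  stmt_10_general ε δ hδ P P'
end

section
/- Let ε ≥ 0, δ ∈ [0,1], and let P and P' be probability measures on a measurable space. Define f_{ε,δ} : [0,1] → [0,1] by f_{ε,δ}(x) = max(0, 1 − δ − e^ε·x, e^{−ε}·(1 − δ − x)). Then P and P' are (ε,δ)-indistinguishable in both orders (i.e. P(S) ≤ e^ε·P'(S) + δ and P'(S) ≤ e^ε·P(S) + δ for every measurable set S) if and only if both (P, P') and (P', P) satisfy the trade-off bound f_{ε,δ}. -/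
/-!
A test `φ` with values in `[0,1]` is the average over `t ∈ (0,1]` of the indicator tests of
`{t < φ}` (layer cake), so the set-wise bound `μ(S) ≤ e^ε ν(S) + δ` integrates to
`∫ φ dμ ≤ e^ε ∫ φ dν + δ`. Applied to `φ` under `(P', P)` this is the bound `1 - δ - e^ε x`, and
applied to `1 - φ` under `(P, P')` it is the bound `e^{-ε}(1 - δ - x)`. Conversely, indicator
tests turn the bound `1 - δ - e^ε x` alone back into indistinguishability.
-/

open MeasureTheory

open Set ENNReal

namespace SatisfiesTradeoff

variable {Ω : Type*} [MeasurableSpace Ω] {P P' : Measure Ω} {f g : ℝ → ℝ}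

lemma mono (hfg : f ≤ g) (hg : SatisfiesTradeoff P P' g) : SatisfiesTradeoff P P' f :=
  fun φ hφ hφ01 => (hfg _).trans (hg φ hφ hφ01)

lemma max (hf : SatisfiesTradeoff P P' f) (hg : SatisfiesTradeoff P P' g) :
    SatisfiesTradeoff P P' (fun x => max (f x) (g x)) :=
  fun φ hφ hφ01 => max_le (hf φ hφ hφ01) (hg φ hφ hφ01)

lemma zero : SatisfiesTradeoff P P' 0 :=
  fun _ _ hφ01 => integral_nonneg fun ω => sub_nonneg.2 (hφ01 ω).2

end SatisfiesTradeoff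

lemma one_sub_mem_Icc_s11 {Ω : Type*} {φ : Ω → ℝ} (hφ01 : ∀ ω, φ ω ∈ Icc (0 : ℝ) 1) :
    ∀ ω, 1 - φ ω ∈ Icc (0 : ℝ) 1 :=
  fun ω => ⟨sub_nonneg.2 (hφ01 ω).2, sub_le_self _ (hφ01 ω).1⟩

section Tests

variable {Ω : Type*} [MeasurableSpace Ω] {μ : Measure Ω} {φ : Ω → ℝ}

lemma integrable_of_mem_Icc_s11 [IsFiniteMeasure μ] (hφ : Measurable φ)
    (hφ01 : ∀ ω, φ ω ∈ Icc (0 : ℝ) 1) : Integrable φ μ :=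
  (integrable_const 1).mono' hφ.aestronglyMeasurable <| ae_of_all _ fun ω => by
    rw [Real.norm_eq_abs, abs_le]
    exact ⟨by linarith [(hφ01 ω).1], (hφ01 ω).2⟩

lemma integral_one_sub [IsProbabilityMeasure μ] (hφ : Integrable φ μ) :
    ∫ ω, (1 - φ ω) ∂μ = 1 - ∫ ω, φ ω ∂μ := by
  rw [integral_sub (integrable_const 1) hφ, integral_const, probReal_univ, one_smul]

lemma lintegral_ofReal_eq_setLIntegral_Ioc (μ : Measure Ω) (hφ : Measurable φ)
    (hφ01 : ∀ ω, φ ω ∈ Icc (0 : ℝ) 1) :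
    ∫⁻ ω, ENNReal.ofReal (φ ω) ∂μ = ∫⁻ t in Ioc 0 1, μ {ω | t < φ ω} := by
  have hlayer_empty : ∀ t ∈ Ioi (1 : ℝ), μ {ω | t < φ ω} = 0 := fun t ht => by
    rw [measure_eq_zero_iff_ae_notMem]
    exact ae_of_all _ fun ω hω => (lt_irrefl _) (((hφ01 ω).2.trans_lt ht).trans hω)
  rw [lintegral_eq_lintegral_meas_lt μ (ae_of_all _ fun ω => (hφ01 ω).1) hφ.aemeasurable,
    ← Ioc_union_Ioi_eq_Ioi zero_le_one,
    lintegral_union measurableSet_Ioi (Ioc_disjoint_Ioi le_rfl),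
    setLIntegral_congr_fun measurableSet_Ioi hlayer_empty, lintegral_zero, add_zero]

end Tests

namespace Indist

variable {Ω : Type*} [MeasurableSpace Ω] {ε δ : ℝ} {μ ν : Measure Ω} {φ : Ω → ℝ}

lemma lintegral_le_s11 (h : Indist ε δ μ ν) (hφ : Measurable φ)
    (hφ01 : ∀ ω, φ ω ∈ Icc (0 : ℝ) 1) :
    ∫⁻ ω, ENNReal.ofReal (φ ω) ∂μ ≤
      ENNReal.ofReal (Real.exp ε) * ∫⁻ ω, ENNReal.ofReal (φ ω) ∂ν + ENNReal.ofReal δ := by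
  have hlayer_meas : Measurable fun t : ℝ => ν {ω | t < φ ω} :=
    Antitone.measurable fun s t hst => measure_mono fun ω hω => hst.trans_lt hω
  simp_rw [lintegral_ofReal_eq_setLIntegral_Ioc _ hφ hφ01]
  calc ∫⁻ t in Ioc 0 1, μ {ω | t < φ ω}
      ≤ ∫⁻ t in Ioc 0 1, (ENNReal.ofReal (Real.exp ε) * ν {ω | t < φ ω} + ENNReal.ofReal δ) :=
        lintegral_mono fun t => h _ (hφ measurableSet_Ioi)
    _ = ENNReal.ofReal (Real.exp ε) * (∫⁻ t in Ioc 0 1, ν {ω | t < φ ω}) + ENNReal.ofReal δ := by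
        rw [lintegral_add_right _ measurable_const, lintegral_const_mul _ hlayer_meas,
          setLIntegral_const, Real.volume_Ioc, sub_zero, ENNReal.ofReal_one, mul_one]

lemma integral_le [IsFiniteMeasure ν] (hδ : 0 ≤ δ) (h : Indist ε δ μ ν) (hφ : Measurable φ)
    (hφ01 : ∀ ω, φ ω ∈ Icc (0 : ℝ) 1) :
    ∫ ω, φ ω ∂μ ≤ Real.exp ε * ∫ ω, φ ω ∂ν + δ := by
  have hφ0 (ρ : Measure Ω) : ∀ᵐ ω ∂ρ, 0 ≤ φ ω := ae_of_all _ fun ω => (hφ01 ω).1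
  have hν_fin : ∫⁻ ω, ENNReal.ofReal (φ ω) ∂ν ≠ ∞ :=
    (integrable_of_mem_Icc_s11 hφ hφ01).lintegral_lt_top.ne
  rw [integral_eq_lintegral_of_nonneg_ae (hφ0 _) hφ.aestronglyMeasurable,
    integral_eq_lintegral_of_nonneg_ae (hφ0 _) hφ.aestronglyMeasurable]
  refine (ENNReal.toReal_mono (by finiteness) (h.lintegral_le_s11 hφ hφ01)).trans_eq ?_
  rw [ENNReal.toReal_add (by finiteness) ofReal_ne_top, ENNReal.toReal_mul,
    ENNReal.toReal_ofReal (Real.exp_pos ε).le, ENNReal.toReal_ofReal hδ]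

end Indist

section Equivalence

variable {Ω : Type*} [MeasurableSpace Ω] {ε δ : ℝ} {P P' : Measure Ω}

lemma SatisfiesTradeoff.of_indist [IsFiniteMeasure P] [IsProbabilityMeasure P'] (hδ : 0 ≤ δ)
    (h : Indist ε δ P' P) : SatisfiesTradeoff P P' (fun x => 1 - δ - Real.exp ε * x) := by
  intro φ hφ hφ01
  rw [integral_one_sub (integrable_of_mem_Icc_s11 hφ hφ01)]
  linarith [h.integral_le hδ hφ hφ01]

lemma SatisfiesTradeoff.of_indist_symm [IsProbabilityMeasure P] [IsProbabilityMeasure P']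
    (hδ : 0 ≤ δ) (h : Indist ε δ P P') :
    SatisfiesTradeoff P P' (fun x => Real.exp (-ε) * (1 - δ - x)) := by
  intro φ hφ hφ01
  have hcompl := h.integral_le (φ := fun ω => 1 - φ ω) hδ (measurable_const.sub hφ)
    (one_sub_mem_Icc_s11 hφ01)
  rw [integral_one_sub (integrable_of_mem_Icc_s11 hφ hφ01)] at hcompl
  calc Real.exp (-ε) * (1 - δ - ∫ ω, φ ω ∂P)
      ≤ Real.exp (-ε) * (Real.exp ε * ∫ ω, (1 - φ ω) ∂P') := by gcongr; linarith
    _ = ∫ ω, (1 - φ ω) ∂P' := by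
        rw [← mul_assoc, ← Real.exp_add, neg_add_cancel, Real.exp_zero, one_mul]

lemma Indist.of_satisfiesTradeoff [IsFiniteMeasure P] [IsProbabilityMeasure P']
    (h : SatisfiesTradeoff P P' (fun x => 1 - δ - Real.exp ε * x)) : Indist ε δ P' P := by
  intro S hS
  have hS01 : ∀ ω, S.indicator 1 ω ∈ Icc (0 : ℝ) 1 := fun ω => by
    by_cases hω : ω ∈ S <;> simp [hω]
  have hreal : P'.real S ≤ Real.exp ε * P.real S + δ := by
    have htest := h (S.indicator 1) (measurable_one.indicator hS) hS01
    rw [integral_one_sub (integrable_of_mem_Icc_s11 (measurable_one.indicator hS) hS01),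
      integral_indicator_one hS, integral_indicator_one hS] at htest
    linarith
  calc P' S = ENNReal.ofReal (P'.real S) := (ofReal_measureReal).symm
    _ ≤ ENNReal.ofReal (Real.exp ε * P.real S + δ) := ENNReal.ofReal_le_ofReal hreal
    _ ≤ ENNReal.ofReal (Real.exp ε * P.real S) + ENNReal.ofReal δ := ENNReal.ofReal_add_le
    _ = ENNReal.ofReal (Real.exp ε) * P S + ENNReal.ofReal δ := by
        rw [ENNReal.ofReal_mul (Real.exp_pos ε).le, ofReal_measureReal]

lemma satisfiesTradeoff_of_indist [IsProbabilityMeasure P] [IsProbabilityMeasure P']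
    (hδ : 0 ≤ δ) (h : Indist ε δ P P') (h' : Indist ε δ P' P) :
    SatisfiesTradeoff P P'
      (fun x => max 0 (max (1 - δ - Real.exp ε * x) (Real.exp (-ε) * (1 - δ - x)))) :=
  SatisfiesTradeoff.zero.max
    ((SatisfiesTradeoff.of_indist hδ h').max (SatisfiesTradeoff.of_indist_symm hδ h))

end Equivalence

theorem stmt_11_general {Ω : Type*} [MeasurableSpace Ω] (ε δ : ℝ)
    (hδ : δ ∈ Set.Icc (0 : ℝ) 1)
    (P P' : Measure Ω) [IsProbabilityMeasure P] [IsProbabilityMeasure P'] :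
    (Indist ε δ P P' ∧ Indist ε δ P' P) ↔
      (SatisfiesTradeoff P P'
          (fun x => max 0 (max (1 - δ - Real.exp ε * x)
            (Real.exp (-ε) * (1 - δ - x)))) ∧
        SatisfiesTradeoff P' P
          (fun x => max 0 (max (1 - δ - Real.exp ε * x)
            (Real.exp (-ε) * (1 - δ - x))))) := by
  have hlinear_le (x : ℝ) :
      1 - δ - Real.exp ε * x ≤
        max 0 (max (1 - δ - Real.exp ε * x) (Real.exp (-ε) * (1 - δ - x))) :=
    (le_max_left _ _).trans (le_max_right _ _)
  constructor
  · rintro ⟨h, h'⟩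
    exact ⟨satisfiesTradeoff_of_indist hδ.1 h h', satisfiesTradeoff_of_indist hδ.1 h' h⟩
  · rintro ⟨h, h'⟩
    exact ⟨.of_satisfiesTradeoff (h'.mono hlinear_le), .of_satisfiesTradeoff (h.mono hlinear_le)⟩

/-- `(ε,δ)`-DP equals `f_{ε,δ}`-DP. For `ε ≥ 0`, `δ ∈ [0,1]`, and
probability measures `P`, `P'` with `f_{ε,δ}(x) = max(0, 1−δ−e^ε·x, e^{−ε}(1−δ−x))`,
the pair is `(ε,δ)`-indistinguishable in both orders iff both `(P,P')` and `(P',P)`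
satisfy the trade-off bound `f_{ε,δ}`. -/
theorem stmt_11 {Ω : Type*} [MeasurableSpace Ω] (ε δ : ℝ) (hε : 0 ≤ ε)
    (hδ : δ ∈ Set.Icc (0 : ℝ) 1)
    (P P' : Measure Ω) [IsProbabilityMeasure P] [IsProbabilityMeasure P'] :
    (Indist ε δ P P' ∧ Indist ε δ P' P) ↔
      (SatisfiesTradeoff P P'
          (fun x => max 0 (max (1 - δ - Real.exp ε * x)
            (Real.exp (-ε) * (1 - δ - x)))) ∧
        SatisfiesTradeoff P' P
          (fun x => max 0 (max (1 - δ - Real.exp ε * x)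
            (Real.exp (-ε) * (1 - δ - x))))) :=
  stmt_11_general ε δ hδ P P'
end

section
/- Let P п P' be probability measures on a measurable space, both absolutely continuous with respect to a common σ-finite measure μ, with respective densities p and p'. Define the privacy loss function ℓ(o) = log(p(o)/p'(o)), with the convention ℓ(o) = +∞ when p'(o) = 0 < p(o). Then for every ε ≥ 0 and δ ≥ 0, the inequality P(S) ≤ e^ε·P'(S) + δ holds for every measurable set S if and only if ∫_ε^∞ e^{ε−z}·P({o : ℓ(o) > z}) dz ≤ δ. -/
/-!
Pointwise, `∫_ε^∞ e^{ε-z} 1[e^z p' < p] p dz = (p - e^ε p')⁺`, so by Tonelli the integral of the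
statement is `∫ (p - e^ε p')⁺ dμ`. On the other hand `P S - e^ε P' S ≤ ∫_S (p - e^ε p')⁺ dμ` for
every `S`, with equality at `S = {e^ε p' < p}`; hence `∫ (p - e^ε p')⁺ dμ` is the least admissible
`δ`.
-/

open MeasureTheory Set Real
open scoped ENNReal

lemma lintegral_Ioi_ofReal_exp_sub (ε : ℝ) :
    ∫⁻ z in Ioi ε, ENNReal.ofReal (exp (ε - z)) = 1 := by
  have hexp : (fun z => exp (ε - z)) = fun z => exp ε * exp (-z) := by
    funext z; rw [sub_eq_add_neg, exp_add]
  have hint : IntegrableOn (fun z => exp (ε - z)) (Ioi ε) := by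
    rw [hexp]; exact (integrableOn_exp_neg_Ioi ε).const_mul _
  rw [← ofReal_integral_eq_lintegral_ofReal hint (.of_forall fun _ => (exp_pos _).le), hexp,
    integral_const_mul, integral_exp_neg_Ioi, ← exp_add, add_neg_cancel, exp_zero,
    ENNReal.ofReal_one]

lemma lintegral_Ioo_ofReal_exp_sub (ε t : ℝ) :
    ∫⁻ z in Ioo ε t, ENNReal.ofReal (exp (ε - z)) = ENNReal.ofReal (1 - exp (ε - t)) := by
  rcases le_or_gt t ε with htε | hεt
  · have : 1 ≤ exp (ε - t) := one_le_exp (by linarith)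
    simp [Ioo_eq_empty_of_le htε, ENNReal.ofReal_of_nonpos (sub_nonpos.mpr this)]
  have hint : IntegrableOn (fun z => exp (ε - z)) (Ioo ε t) :=
    (continuous_exp.comp (continuous_sub_left ε)).integrableOn_Icc.mono_set Ioo_subset_Icc_self
  rw [← ofReal_integral_eq_lintegral_ofReal hint (.of_forall fun _ => (exp_pos _).le),
    ← integral_Ioc_eq_integral_Ioo, ← intervalIntegral.integral_of_le hεt.le,
    intervalIntegral.integral_comp_sub_left (fun x => exp x) ε, integral_exp, sub_self, exp_zero]

lemma lintegral_Ioi_ofReal_exp_sub_mul_ite (ε : ℝ) {a b : ℝ} (hb : 0 ≤ b) :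
    ∫⁻ z in Ioi ε, ENNReal.ofReal (exp (ε - z)) * (if exp z * b < a then ENNReal.ofReal a else 0)
      = ENNReal.ofReal (a - exp ε * b) := by
  rcases le_or_gt a 0 with ha | ha
  · have : a - exp ε * b ≤ 0 := by nlinarith [exp_pos ε]
    simp [ENNReal.ofReal_of_nonpos ha, ENNReal.ofReal_of_nonpos this]
  rcases hb.eq_or_lt with rfl | hb
  · simp only [mul_zero, sub_zero, ha, if_true]
    rw [lintegral_mul_const _ (by fun_prop), lintegral_Ioi_ofReal_exp_sub, one_mul]
  have hab : 0 < a / b := div_pos ha hb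
  have hlevel : {z | exp z * b < a} = Iio (log (a / b)) := by
    ext z
    show exp z * b < a ↔ z < log (a / b)
    rw [lt_log_iff_exp_lt hab, lt_div_iff₀ hb]
  have hite : (fun z => ENNReal.ofReal (exp (ε - z)) *
        (if exp z * b < a then ENNReal.ofReal a else 0))
      = (Iio (log (a / b))).indicator fun z => ENNReal.ofReal (exp (ε - z)) * ENNReal.ofReal a := by
    funext z; simp [indicator_apply, ← hlevel]
  rw [hite, lintegral_indicator measurableSet_Iio, Measure.restrict_restrict measurableSet_Iio,
    Iio_inter_Ioi, lintegral_mul_const _ (by fun_prop), lintegral_Ioo_ofReal_exp_sub,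
    ← ENNReal.ofReal_mul' ha.le, exp_sub, exp_log hab]
  congr 1
  field_simp

lemma lintegral_Ioi_exp_sub_mul_withDensity_setOf_lt {Ω : Type*} [MeasurableSpace Ω]
    (μ : Measure Ω) [SFinite μ] {p p' : Ω → ℝ} (hpm : Measurable p) (hp'm : Measurable p')
    (hp'0 : ∀ o, 0 ≤ p' o) (ε : ℝ) :
    ∫⁻ z in Ioi ε, ENNReal.ofReal (exp (ε - z)) *
        μ.withDensity (fun o => ENNReal.ofReal (p o)) {o | exp z * p' o < p o}
      = ∫⁻ o, ENNReal.ofReal (p o - exp ε * p' o) ∂μ := by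
  have hlevel : ∀ z, MeasurableSet {o | exp z * p' o < p o} :=
    fun z => measurableSet_lt (by fun_prop) hpm
  have hinner : ∀ z, ENNReal.ofReal (exp (ε - z)) *
      μ.withDensity (fun o => ENNReal.ofReal (p o)) {o | exp z * p' o < p o}
      = ∫⁻ o, ENNReal.ofReal (exp (ε - z)) *
          (if exp z * p' o < p o then ENNReal.ofReal (p o) else 0) ∂μ := by
    intro z
    rw [withDensity_apply _ (hlevel z), ← lintegral_indicator (hlevel z),
      ← lintegral_const_mul' _ _ ENNReal.ofReal_ne_top]
    rfl
  simp_rw [hinner]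
  rw [lintegral_lintegral_swap]
  · exact lintegral_congr fun o => lintegral_Ioi_ofReal_exp_sub_mul_ite ε (hp'0 o)
  · have hset : MeasurableSet {q : ℝ × Ω | exp q.1 * p' q.2 < p q.2} :=
      measurableSet_lt (by fun_prop) (by fun_prop)
    exact (Measurable.mul (by fun_prop)
      (Measurable.ite hset (by fun_prop) measurable_const)).aemeasurable

section HockeyStick

variable {Ω : Type*} [MeasurableSpace Ω] {μ : Measure Ω} {f g : Ω → ℝ≥0∞} {c : ℝ≥0∞}

lemma withDensity_apply_le_mul_add_lintegral_tsub (hg : Measurable g) {S : Set Ω}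
    (hS : MeasurableSet S) :
    μ.withDensity f S ≤ c * μ.withDensity g S + ∫⁻ o, f o - c * g o ∂μ := by
  rw [withDensity_apply _ hS, withDensity_apply _ hS]
  calc ∫⁻ o in S, f o ∂μ
      ≤ ∫⁻ o in S, c * g o + (f o - c * g o) ∂μ := lintegral_mono fun o => le_add_tsub
    _ = c * ∫⁻ o in S, g o ∂μ + ∫⁻ o in S, f o - c * g o ∂μ := by
      rw [lintegral_add_left (hg.const_mul c), lintegral_const_mul c hg]
    _ ≤ c * ∫⁻ o in S, g o ∂μ + ∫⁻ o, f o - c * g o ∂μ := by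
      gcongr; exact Measure.restrict_le_self

lemma withDensity_setOf_lt_eq_mul_add_lintegral_tsub (hf : Measurable f) (hg : Measurable g) :
    μ.withDensity f {o | c * g o < f o}
      = c * μ.withDensity g {o | c * g o < f o} + ∫⁻ o, f o - c * g o ∂μ := by
  have hS : MeasurableSet {o | c * g o < f o} := measurableSet_lt (hg.const_mul c) hf
  have hsupp : (fun o => f o - c * g o).support ⊆ {o | c * g o < f o} :=
    fun o ho => tsub_pos_iff_lt.mp (pos_iff_ne_zero.mpr ho)
  rw [withDensity_apply _ hS, withDensity_apply _ hS, ← lintegral_const_mul c hg,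
    ← setLIntegral_eq_of_support_subset hsupp, ← lintegral_add_left (hg.const_mul c)]
  exact setLIntegral_congr_fun hS fun o ho => (add_tsub_cancel_of_le (le_of_lt ho)).symm

lemma forall_withDensity_le_mul_add_iff_lintegral_tsub_le [IsFiniteMeasure (μ.withDensity g)]
    (hf : Measurable f) (hg : Measurable g) (hc : c ≠ ∞) (d : ℝ≥0∞) :
    (∀ S, MeasurableSet S → μ.withDensity f S ≤ c * μ.withDensity g S + d) ↔
      ∫⁻ o, f o - c * g o ∂μ ≤ d := by
  constructor
  · intro h
    have hS := h _ (measurableSet_lt (hg.const_mul c) hf)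
    rw [withDensity_setOf_lt_eq_mul_add_lintegral_tsub hf hg] at hS
    exact (ENNReal.add_le_add_iff_left (ENNReal.mul_ne_top hc (measure_ne_top _ _))).mp hS
  · intro h S hS
    exact (withDensity_apply_le_mul_add_lintegral_tsub hg hS).trans (by gcongr)

end HockeyStick

theorem stmt_12_general {Ω : Type*} [MeasurableSpace Ω] (μ : Measure Ω) [SigmaFinite μ]
    (p p' : Ω → ℝ) (hp'0 : ∀ o, 0 ≤ p' o)
    (hpm : Measurable p) (hp'm : Measurable p')
    (P P' : Measure Ω) [IsProbabilityMeasure P']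
    (hP : P = μ.withDensity fun o => ENNReal.ofReal (p o))
    (hP' : P' = μ.withDensity fun o => ENNReal.ofReal (p' o))
    (ε δ : ℝ) :
    (∀ S : Set Ω, MeasurableSet S →
        P S ≤ ENNReal.ofReal (Real.exp ε) * P' S + ENNReal.ofReal δ) ↔
      ∫⁻ z in Set.Ioi ε, ENNReal.ofReal (Real.exp (ε - z)) *
          P {o | Real.exp z * p' o < p o} ≤ ENNReal.ofReal δ := by
  subst hP hP'
  have hpositivePart : ∀ o, ENNReal.ofReal (p o - exp ε * p' o)
      = ENNReal.ofReal (p o) - ENNReal.ofReal (exp ε) * ENNReal.ofReal (p' o) := fun o => by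
    rw [ENNReal.ofReal_sub _ (by have := hp'0 o; positivity), ENNReal.ofReal_mul (exp_pos ε).le]
  rw [lintegral_Ioi_exp_sub_mul_withDensity_setOf_lt μ hpm hp'm hp'0 ε]
  simp_rw [hpositivePart]
  exact forall_withDensity_le_mul_add_iff_lintegral_tsub_le hpm.ennreal_ofReal
    hp'm.ennreal_ofReal ENNReal.ofReal_ne_top _

/-- let `P`, `P'` be probability measures on a measurable space, both
absolutely continuous w.r.t. a common σ-finite measure `μ`, with densities `p`, `p'`.
With the privacy loss `ℓ(o) = log(p(o)/p'(o))` (convention `+∞` when `p'(o) = 0 < p(o)`;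
the superlevel set `{o : ℓ(o) > z}` is encoded as `{o : p(o) > e^z·p'(o)}`), for every
`ε ≥ 0` and `δ ≥ 0`: `P(S) ≤ e^ε·P'(S) + δ` for every measurable `S` iff
`∫_ε^∞ e^{ε−z}·P({o : ℓ(o) > z}) dz ≤ δ`. -/
theorem stmt_12 {Ω : Type*} [MeasurableSpace Ω] (μ : Measure Ω) [SigmaFinite μ]
    (p p' : Ω → ℝ) (hp0 : ∀ o, 0 ≤ p o) (hp'0 : ∀ o, 0 ≤ p' o)
    (hpm : Measurable p) (hp'm : Measurable p')
    (P P' : Measure Ω) [IsProbabilityMeasure P] [IsProbabilityMeasure P']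
    (hP : P = μ.withDensity fun o => ENNReal.ofReal (p o))
    (hP' : P' = μ.withDensity fun o => ENNReal.ofReal (p' o))
    (ε δ : ℝ) (hε : 0 ≤ ε) (hδ : 0 ≤ δ) :
    (∀ S : Set Ω, MeasurableSet S →
        P S ≤ ENNReal.ofReal (Real.exp ε) * P' S + ENNReal.ofReal δ) ↔
      ∫⁻ z in Set.Ioi ε, ENNReal.ofReal (Real.exp (ε - z)) *
          P {o | Real.exp z * p' o < p o} ≤ ENNReal.ofReal δ :=
  stmt_12_general μ p p' hp'0 hpm hp'm P P' hP hP' ε δ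
end
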